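/- arXiv:0802.0759 — 9 statements merged into one kernel-verified Lean document; each statement's English description precedes it below -/
import Mathlib

section
/- Let s > 0 be a real number and let P(x) = Σ_{k=m}^{d} b_k x^k be a real polynomial function whose lowest-order nonzero coefficient is b_m ≠ 0. Then κ^{m+1} · ∫_0^s e^{-κx} P(x) dx tends to m! · b_m as κ → +∞. -/
/-!
Substituting `u = κx` turns `κ^{k+1} ∫_0^s e^{-κx} x^k dx` into `∫_0^{κs} e^{-u} u^k du`, which
tends to `Γ(k+1) = k!`. After multiplying by `κ^{m+1}` instead, the monomial `x^k` with `k > m`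
carries an extra factor `κ^{m-k} → 0`, so by linearity only the lowest term `b_m x^m` survives.
-/

open MeasureTheory Filter Real Set Topology
open scoped Nat

lemma integrableOn_exp_neg_mul_pow_Ioi (k : ℕ) :
    IntegrableOn (fun u : ℝ => exp (-u) * u ^ k) (Ioi 0) := by
  simpa [rpow_natCast] using GammaIntegral_convergent (s := k + 1) (by positivity)

lemma integral_exp_neg_mul_pow_Ioi (k : ℕ) : ∫ u in Ioi (0 : ℝ), exp (-u) * u ^ k = k ! := by
  have := Gamma_eq_integral (s := k + 1) (by positivity)
  simp only [add_sub_cancel_right, rpow_natCast] at this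
  rw [← this, Gamma_nat_eq_factorial]

lemma pow_succ_mul_integral_exp_neg_mul_mul_pow {κ : ℝ} (hκ : κ ≠ 0) (s : ℝ) (k : ℕ) :
    κ ^ (k + 1) * ∫ x in (0 : ℝ)..s, exp (-κ * x) * x ^ k
      = ∫ u in (0 : ℝ)..κ * s, exp (-u) * u ^ k := by
  have hsub := intervalIntegral.integral_comp_mul_left (fun u : ℝ => exp (-u) * u ^ k) hκ
    (a := 0) (b := s)
  rw [mul_zero, smul_eq_mul] at hsub
  have hscale : ∫ x in (0 : ℝ)..s, exp (-(κ * x)) * (κ * x) ^ k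
      = κ ^ k * ∫ x in (0 : ℝ)..s, exp (-κ * x) * x ^ k := by
    rw [← intervalIntegral.integral_const_mul]
    simp only [mul_pow, neg_mul]
    ring_nf
  rw [hscale] at hsub
  rw [pow_succ', mul_assoc, hsub, mul_inv_cancel_left₀ hκ]

lemma tendsto_pow_succ_mul_integral_exp_neg_mul_mul_pow {s : ℝ} (hs : 0 < s) (k : ℕ) :
    Tendsto (fun κ : ℝ => κ ^ (k + 1) * ∫ x in (0 : ℝ)..s, exp (-κ * x) * x ^ k)
      atTop (𝓝 (k ! : ℝ)) := by
  have h := (intervalIntegral_tendsto_integral_Ioi 0 (integrableOn_exp_neg_mul_pow_Ioi k)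
    tendsto_id).comp (tendsto_id.atTop_mul_const hs)
  rw [integral_exp_neg_mul_pow_Ioi] at h
  refine h.congr' ?_
  filter_upwards [eventually_ne_atTop 0] with κ hκ
  exact (pow_succ_mul_integral_exp_neg_mul_mul_pow hκ s k).symm

lemma tendsto_pow_mul_integral_exp_neg_mul_mul_pow {s : ℝ} (hs : 0 < s) {m k : ℕ} (hmk : m ≤ k) :
    Tendsto (fun κ : ℝ => κ ^ (m + 1) * ∫ x in (0 : ℝ)..s, exp (-κ * x) * x ^ k)
      atTop (𝓝 (if k = m then (m ! : ℝ) else 0)) := by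
  have hpow : Tendsto (fun κ : ℝ => κ⁻¹ ^ (k - m)) atTop (𝓝 (if k = m then 1 else 0)) := by
    obtain rfl | hkm := eq_or_ne k m
    · simp
    · simpa [hkm, zero_pow (Nat.sub_ne_zero_of_lt (hmk.lt_of_ne' hkm))] using
        (tendsto_inv_atTop_zero (𝕜 := ℝ)).pow (k - m)
  have h := (tendsto_pow_succ_mul_integral_exp_neg_mul_mul_pow hs k).mul hpow
  rw [show (k ! : ℝ) * (if k = m then 1 else 0) = if k = m then (m ! : ℝ) else 0 by
    split_ifs with h <;> simp [h]] at h
  refine h.congr' ?_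
  filter_upwards [eventually_ne_atTop 0] with κ hκ
  rw [inv_pow, mul_right_comm, ← pow_sub₀ κ hκ (by omega)]
  congr 2
  omega

theorem stmt_1_general (s : ℝ) (hs : 0 < s) (m d : ℕ) (hmd : m ≤ d) (b : ℕ → ℝ)
    (P : ℝ → ℝ) (hP : ∀ x, P x = ∑ k ∈ Finset.Icc m d, b k * x ^ k) :
    Filter.Tendsto (fun κ : ℝ => κ ^ (m + 1) * ∫ x in (0:ℝ)..s, Real.exp (-κ * x) * P x)
      Filter.atTop (nhds ((Nat.factorial m : ℝ) * b m)) := by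
  have hlinear : ∀ κ : ℝ, κ ^ (m + 1) * ∫ x in (0:ℝ)..s, exp (-κ * x) * P x
      = ∑ k ∈ Finset.Icc m d, b k * (κ ^ (m + 1) * ∫ x in (0:ℝ)..s, exp (-κ * x) * x ^ k) := by
    intro κ
    simp_rw [hP, Finset.mul_sum, mul_left_comm _ (b _)]
    rw [intervalIntegral.integral_finsetSum fun k _ =>
      (by fun_prop : Continuous _).intervalIntegrable _ _]
    simp_rw [intervalIntegral.integral_const_mul, Finset.mul_sum, mul_left_comm]
  simp_rw [hlinear]
  have hlim := tendsto_finsetSum (Finset.Icc m d) fun k hk =>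
    (tendsto_pow_mul_integral_exp_neg_mul_mul_pow hs (Finset.mem_Icc.1 hk).1).const_mul (b k)
  simpa [mul_ite, Finset.sum_ite_eq', hmd, mul_comm] using hlim

/-- Watson-type asymptotics at `κ → +∞`: if `P(x) = ∑_{k=m}^d b_k x^k` with lowest
nonzero coefficient `b_m ≠ 0` and `s > 0`, then
`κ^{m+1} ∫_0^s e^{-κx} P(x) dx → m! b_m` as `κ → +∞`. -/
theorem stmt_1 (s : ℝ) (hs : 0 < s) (m d : ℕ) (hmd : m ≤ d) (b : ℕ → ℝ) (hb : b m ≠ 0)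
    (P : ℝ → ℝ) (hP : ∀ x, P x = ∑ k ∈ Finset.Icc m d, b k * x ^ k) :
    Filter.Tendsto (fun κ : ℝ => κ ^ (m + 1) * ∫ x in (0:ℝ)..s, Real.exp (-κ * x) * P x)
      Filter.atTop (nhds ((Nat.factorial m : ℝ) * b m)) :=
  stmt_1_general s hs m d hmd b P hP
end

section
/- Given an integer r ≥ 3, natural numbers n_1, ..., n_r, and real numbers σ_2, ..., σ_{r-1} such that σ_i ≠ 0 and σ_i and s_* + σ_i have the same sign for every i (where s_* = 2(n_1 + n_r + 2)), there exists a real number κ_1 for which 𝓘(κ_1) = 0, where 𝓘 is the integral defined below. -/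
set_option maxRecDepth 8000 in
set_option maxHeartbeats 1000000 in
/-- Theorem 3.6 (analytic core): if each `σᵢ` is nonzero and has the same sign as
`s_* + σᵢ`, then the invariant integral `𝓘` vanishes for some real `κ₁`. -/
theorem stmt_6 (r : ℕ) (hr : 3 ≤ r) (n : ℕ → ℕ) (σ : ℕ → ℝ)
    (sstar : ℝ) (hsstar : sstar = 2 * ((n 1 : ℝ) + (n r : ℝ) + 2))
    (hσ : ∀ i ∈ Finset.Icc 2 (r - 1), σ i ≠ 0 ∧ 0 < σ i * (sstar + σ i))
    (I : ℝ → ℝ)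
    (hI : ∀ κ, I κ = ∫ y in (0:ℝ)..sstar,
        Real.exp (-κ * y) * y ^ n 1 * (y - sstar) ^ n r * (y - 2 * (n 1 : ℝ) - 2) *
          ∏ i ∈ Finset.Icc 2 (r - 1), (y + σ i) ^ n i) :
    ∃ κ₁ : ℝ, I κ₁ = 0 := by
  classical
  obtain ⟨c, hc⟩ : ∃ c : ℝ, c = 2 * (n 1 : ℝ) + 2 := ⟨_, rfl⟩
  have hn1 : (0:ℝ) ≤ (n 1 : ℝ) := Nat.cast_nonneg _
  have hnr : (0:ℝ) ≤ (n r : ℝ) := Nat.cast_nonneg _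
  have hc0 : 0 < c := by rw [hc]; linarith
  have hcs : c < sstar := by rw [hc, hsstar]; linarith
  have hs0 : 0 < sstar := hc0.trans hcs
  obtain ⟨τ, hτ⟩ : ∃ τ : ℕ → ℝ, τ = fun i => if σ i < 0 then -1 else 1 := ⟨_, rfl⟩
  obtain ⟨ε, hε⟩ : ∃ ε : ℝ, ε = (-1) ^ (n r) * ∏ i ∈ Finset.Icc 2 (r-1), (τ i) ^ (n i) := ⟨_, rfl⟩
  obtain ⟨g, hg⟩ : ∃ g : ℝ → ℝ, g = fun y => ε * (y ^ n 1 * (y - sstar) ^ n r *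
      ∏ i ∈ Finset.Icc 2 (r-1), (y + σ i) ^ n i) := ⟨_, rfl⟩
  have hgcont : Continuous g := by
    rw [hg]
    apply continuous_const.mul
    exact (((continuous_pow _).mul ((continuous_id.sub continuous_const).pow _)).mul
      (continuous_finset_prod _ fun i _ => (continuous_id.add continuous_const).pow _))
  have hgid : ∀ y : ℝ, g y = y ^ n 1 * (sstar - y) ^ n r *
      ∏ i ∈ Finset.Icc 2 (r-1), (τ i * (y + σ i)) ^ n i := by
    intro y
    have h1 : ∏ i ∈ Finset.Icc 2 (r-1), (τ i * (y + σ i)) ^ n i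
        = (∏ i ∈ Finset.Icc 2 (r-1), (τ i) ^ n i) *
          ∏ i ∈ Finset.Icc 2 (r-1), (y + σ i) ^ n i := by
      rw [← Finset.prod_mul_distrib]
      exact Finset.prod_congr rfl fun i _ => mul_pow _ _ _
    have h2 : (sstar - y) ^ n r = (-1:ℝ) ^ n r * (y - sstar) ^ n r := by
      rw [← mul_pow]; congr 1; ring
    simp only [hg]
    rw [hε, h1, h2]; ring
  have hτpos : ∀ i ∈ Finset.Icc 2 (r-1), ∀ y ∈ Set.Icc (0:ℝ) sstar, 0 < τ i * (y + σ i) := by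
    intro i hi y hy
    obtain ⟨hσ0, hσs⟩ := hσ i hi
    rcases lt_or_gt_of_ne hσ0 with hneg | hpos
    · have hss : sstar + σ i < 0 := by nlinarith
      have hτi : τ i = -1 := by simp only [hτ]; exact if_pos hneg
      rw [hτi]
      have : y + σ i < 0 := by linarith [hy.2]
      linarith
    · have hτi : τ i = 1 := by simp only [hτ]; exact if_neg (not_lt.mpr hpos.le)
      rw [hτi]
      have : 0 < y + σ i := by linarith [hy.1]
      linarith
  have hgnonneg : ∀ y ∈ Set.Icc (0:ℝ) sstar, 0 ≤ g y := by
    intro y hy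
    rw [hgid]
    have h1 : (0:ℝ) ≤ y ^ n 1 := pow_nonneg hy.1 _
    have h2 : (0:ℝ) ≤ (sstar - y) ^ n r := pow_nonneg (by linarith [hy.2]) _
    have h3 : (0:ℝ) ≤ ∏ i ∈ Finset.Icc 2 (r-1), (τ i * (y + σ i)) ^ n i :=
      Finset.prod_nonneg fun i hi => pow_nonneg (hτpos i hi y hy).le _
    positivity
  have hgpos : ∀ y ∈ Set.Ioo (0:ℝ) sstar, 0 < g y := by
    intro y hy
    rw [hgid]
    have h1 : (0:ℝ) < y ^ n 1 := pow_pos hy.1 _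
    have h2 : (0:ℝ) < (sstar - y) ^ n r := pow_pos (by linarith [hy.2]) _
    have h3 : (0:ℝ) < ∏ i ∈ Finset.Icc 2 (r-1), (τ i * (y + σ i)) ^ n i :=
      Finset.prod_pos fun i hi => pow_pos (hτpos i hi y ⟨hy.1.le, hy.2.le⟩) _
    positivity
  have hεne : ε ≠ 0 := by
    intro h
    have h2 := hgpos (sstar/2) ⟨by linarith, by linarith⟩
    simp only [hg, h, zero_mul, lt_self_iff_false] at h2
  -- the renormalized integral
  obtain ⟨J, hJ⟩ : ∃ J : ℝ → ℝ, J = fun κ => ∫ y in (0:ℝ)..sstar, Real.exp (-κ*y) * (g y * (y - c)) := ⟨_, rfl⟩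
  have hJI : ∀ κ, J κ = ε * I κ := by
    intro κ
    rw [hI]
    simp only [hJ]
    rw [← intervalIntegral.integral_const_mul]
    apply intervalIntegral.integral_congr
    intro y _
    rw [hg, hc]
    ring
  have hJcont : Continuous J := by
    rw [hJ]

    apply intervalIntegral.continuous_parametric_intervalIntegral_of_continuous'
      (μ := MeasureTheory.volume) (f := fun κ y => Real.exp (-κ*y) * (g y * (y - c)))
    show Continuous (Function.uncurry fun κ y => Real.exp (-κ*y) * (g y * (y - c)))
    apply Continuous.mul
    · exact ((continuous_fst.neg).mul continuous_snd).rexp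
    · exact (hgcont.comp continuous_snd).mul (continuous_snd.sub continuous_const)
  have hcont1 : ∀ κ : ℝ, Continuous fun y : ℝ => Real.exp (-κ*y) * (g y * (y - c)) := by
    intro κ; fun_prop
  have hgyc : Continuous fun y : ℝ => g y * (y - c) := by fun_prop
  have hgcy : Continuous fun y : ℝ => g y * (c - y) := by fun_prop
  -- key constants
  obtain ⟨M, hM⟩ : ∃ M : ℝ, M = ∫ y in c..sstar, g y * (y - c) := ⟨_, rfl⟩
  obtain ⟨m, hm⟩ : ∃ m : ℝ, m = ∫ y in (0:ℝ)..(c/2), g y * (c - y) := ⟨_, rfl⟩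
  obtain ⟨d, hd⟩ : ∃ d : ℝ, d = (c + sstar) / 2 := ⟨_, rfl⟩
  have hcd : c < d := by rw [hd]; linarith
  have hds : d < sstar := by rw [hd]; linarith
  obtain ⟨M', hM'⟩ : ∃ M' : ℝ, M' = ∫ y in (0:ℝ)..c, g y * (c - y) := ⟨_, rfl⟩
  obtain ⟨m', hm'⟩ : ∃ m' : ℝ, m' = ∫ y in d..sstar, g y * (y - c) := ⟨_, rfl⟩
  have hMnn : 0 ≤ M := by
    rw [hM]
    apply intervalIntegral.integral_nonneg hcs.le
    intro y hy
    have := hgnonneg y ⟨by linarith [hy.1], hy.2⟩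
    nlinarith [hy.1]
  have hM'nn : 0 ≤ M' := by
    rw [hM']
    apply intervalIntegral.integral_nonneg hc0.le
    intro y hy
    have := hgnonneg y ⟨hy.1, by linarith [hy.2]⟩
    nlinarith [hy.2]
  have hmpos : 0 < m := by
    rw [hm]
    apply intervalIntegral.intervalIntegral_pos_of_pos_on
      (hgcy.intervalIntegrable _ _)
    · intro y hy
      have := hgpos y ⟨hy.1, by linarith [hy.2]⟩
      nlinarith [hy.2]
    · linarith
  have hm'pos : 0 < m' := by
    rw [hm']
    apply intervalIntegral.intervalIntegral_pos_of_pos_on (hgyc.intervalIntegrable _ _)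
    · intro y hy
      have := hgpos y ⟨by linarith [hy.1], hy.2⟩
      nlinarith [hy.1]
    · exact hds
  -- splitting of J
  have hsplit : ∀ κ : ℝ, ∀ p : ℝ, p ∈ Set.Icc (0:ℝ) sstar →
      J κ = (∫ y in (0:ℝ)..p, Real.exp (-κ*y) * (g y * (y - c)))
          + ∫ y in p..sstar, Real.exp (-κ*y) * (g y * (y - c)) := by
    intro κ p _
    simp only [hJ]
    exact (intervalIntegral.integral_add_adjacent_intervals
      ((hcont1 κ).intervalIntegrable _ _) ((hcont1 κ).intervalIntegrable _ _)).symm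
  -- J is eventually negative on the right
  obtain ⟨a, haexp, ha0⟩ : ∃ a : ℝ, Real.exp (-a * (c/2)) < m / (M + 1) ∧ 0 < a := by
    have htend : Filter.Tendsto (fun κ : ℝ => Real.exp (-κ * (c/2)))
        Filter.atTop (nhds 0) := by
      apply Real.tendsto_exp_atBot.comp
      have h1 : Filter.Tendsto (fun κ : ℝ => κ * (c/2)) Filter.atTop Filter.atTop :=
        Filter.Tendsto.atTop_mul_const (by linarith) Filter.tendsto_id
      have := Filter.tendsto_neg_atTop_atBot.comp h1
      simpa [Function.comp_def, neg_mul] using this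
    have h2 : ∀ᶠ κ : ℝ in Filter.atTop, Real.exp (-κ * (c/2)) < m / (M + 1) :=
      htend.eventually_lt_const (by positivity)
    exact ((h2.and (Filter.eventually_gt_atTop 0)).exists)
  have hJa : J a < 0 := by
    obtain ⟨e, he⟩ : ∃ e : ℝ, e = Real.exp (-a * (c/2)) := ⟨_, rfl⟩
    have he0 : 0 < e := he ▸ Real.exp_pos _
    -- piece over [0, c/2]
    have hT1 : (∫ y in (0:ℝ)..(c/2), Real.exp (-a*y) * (g y * (y - c))) ≤ e * (-m) := by
      have : e * (-m) = ∫ y in (0:ℝ)..(c/2), e * (g y * (y - c)) := by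
        rw [intervalIntegral.integral_const_mul, hm, ← intervalIntegral.integral_neg]
        congr 1
        apply intervalIntegral.integral_congr
        intro y _; ring
      rw [this]
      apply intervalIntegral.integral_mono_on (by linarith)
        ((hcont1 a).intervalIntegrable _ _)
        ((continuous_const.mul hgyc).intervalIntegrable _ _)
      intro y hy
      have hgy : 0 ≤ g y := hgnonneg y ⟨hy.1, by linarith [hy.2]⟩
      have hu : g y * (y - c) ≤ 0 := by nlinarith [hy.2]
      have hee : e ≤ Real.exp (-a*y) := by
        rw [he]
        apply Real.exp_le_exp.2
        nlinarith [hy.2]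
      exact mul_le_mul_of_nonpos_right hee hu
    -- piece over [c/2, c]
    have hT2 : (∫ y in (c/2)..c, Real.exp (-a*y) * (g y * (y - c))) ≤ 0 := by
      rw [← intervalIntegral.integral_zero (a := c/2) (b := c) (μ := MeasureTheory.volume)]
      apply intervalIntegral.integral_mono_on (by linarith)
        ((hcont1 a).intervalIntegrable _ _)
        (continuous_const.intervalIntegrable _ _)
      intro y hy
      have hgy : 0 ≤ g y := hgnonneg y ⟨by linarith [hy.1], by linarith [hy.2]⟩
      have hexp : 0 < Real.exp (-a*y) := Real.exp_pos _
      nlinarith [mul_nonneg hexp.le hgy, hy.2]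
    -- piece over [c, sstar]
    have hT3 : (∫ y in c..sstar, Real.exp (-a*y) * (g y * (y - c))) ≤ e * e * M := by
      have hec : Real.exp (-a*c) = e * e := by
        rw [he, ← Real.exp_add]; congr 1; ring
      have : e * e * M = ∫ y in c..sstar, Real.exp (-a*c) * (g y * (y - c)) := by
        rw [intervalIntegral.integral_const_mul, hec, hM]
      rw [this]
      apply intervalIntegral.integral_mono_on hcs.le
        ((hcont1 a).intervalIntegrable _ _)
        ((continuous_const.mul hgyc).intervalIntegrable _ _)
      intro y hy
      have hgy : 0 ≤ g y := hgnonneg y ⟨by linarith [hy.1], hy.2⟩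
      have hu : 0 ≤ g y * (y - c) := by nlinarith [hy.1]
      have hee : Real.exp (-a*y) ≤ Real.exp (-a*c) := by
        apply Real.exp_le_exp.2
        nlinarith [hy.1]
      exact mul_le_mul_of_nonneg_right hee hu
    have hsplit1 := hsplit a c ⟨hc0.le, hcs.le⟩
    have hsplit2 : (∫ y in (0:ℝ)..c, Real.exp (-a*y) * (g y * (y - c)))
        = (∫ y in (0:ℝ)..(c/2), Real.exp (-a*y) * (g y * (y - c)))
          + ∫ y in (c/2)..c, Real.exp (-a*y) * (g y * (y - c)) :=
      (intervalIntegral.integral_add_adjacent_intervals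
        ((hcont1 a).intervalIntegrable _ _) ((hcont1 a).intervalIntegrable _ _)).symm
    rw [hsplit1, hsplit2]
    have hkey : e * M < m := by
      have h1 : e * (M + 1) < m := by
        have := mul_lt_mul_of_pos_right haexp (show (0:ℝ) < M + 1 by linarith)
        rwa [div_mul_cancel₀ _ (by linarith : M + 1 ≠ 0), ← he] at this
      nlinarith
    nlinarith [mul_lt_mul_of_pos_left hkey he0]
  -- J is eventually positive on the left
  obtain ⟨b, hbexp, hb0⟩ : ∃ b : ℝ, (M' + 1) / m' < Real.exp (-b * (d - c)) ∧ b < 0 := by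
    have htend : Filter.Tendsto (fun κ : ℝ => Real.exp (-κ * (d - c)))
        Filter.atBot Filter.atTop := by
      apply Real.tendsto_exp_atTop.comp
      have h1 : Filter.Tendsto (fun κ : ℝ => κ * (d - c)) Filter.atBot Filter.atBot :=
        Filter.Tendsto.atBot_mul_const (by linarith) Filter.tendsto_id
      have := Filter.tendsto_neg_atBot_atTop.comp h1
      simpa [Function.comp_def, neg_mul] using this
    have h2 : ∀ᶠ κ : ℝ in Filter.atBot, (M' + 1) / m' < Real.exp (-κ * (d - c)) :=
      htend.eventually (Filter.eventually_gt_atTop _)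
    exact ((h2.and (Filter.eventually_lt_atBot 0)).exists)
  have hJb : 0 < J b := by
    -- piece over [0, c]
    have hT1 : Real.exp (-b*c) * (-M') ≤
        ∫ y in (0:ℝ)..c, Real.exp (-b*y) * (g y * (y - c)) := by
      have : Real.exp (-b*c) * (-M') = ∫ y in (0:ℝ)..c, Real.exp (-b*c) * (g y * (y - c)) := by
        rw [intervalIntegral.integral_const_mul, hM']
        congr 1
        rw [← intervalIntegral.integral_neg]
        apply intervalIntegral.integral_congr
        intro y _; ring
      rw [this]
      apply intervalIntegral.integral_mono_on hc0.le
        ((continuous_const.mul hgyc).intervalIntegrable _ _)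
        ((hcont1 b).intervalIntegrable _ _)
      intro y hy
      have hgy : 0 ≤ g y := hgnonneg y ⟨hy.1, by linarith [hy.2]⟩
      have hu : g y * (y - c) ≤ 0 := by nlinarith [hy.2]
      have hee : Real.exp (-b*y) ≤ Real.exp (-b*c) := by
        apply Real.exp_le_exp.2
        nlinarith [hy.2]
      exact mul_le_mul_of_nonpos_right hee hu
    -- piece over [c, d]
    have hT2 : (0:ℝ) ≤ ∫ y in c..d, Real.exp (-b*y) * (g y * (y - c)) := by
      apply intervalIntegral.integral_nonneg hcd.le
      intro y hy
      have hgy : 0 ≤ g y := hgnonneg y ⟨by linarith [hy.1], by linarith [hy.2]⟩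
      have hexp : 0 < Real.exp (-b*y) := Real.exp_pos _
      nlinarith [mul_nonneg hexp.le hgy, hy.1]
    -- piece over [d, sstar]
    have hT3 : Real.exp (-b*d) * m' ≤
        ∫ y in d..sstar, Real.exp (-b*y) * (g y * (y - c)) := by
      have : Real.exp (-b*d) * m' = ∫ y in d..sstar, Real.exp (-b*d) * (g y * (y - c)) := by
        rw [intervalIntegral.integral_const_mul, hm']
      rw [this]
      apply intervalIntegral.integral_mono_on hds.le
        ((continuous_const.mul hgyc).intervalIntegrable _ _)
        ((hcont1 b).intervalIntegrable _ _)
      intro y hy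
      have hgy : 0 ≤ g y := hgnonneg y ⟨by linarith [hy.1], hy.2⟩
      have hu : 0 ≤ g y * (y - c) := by nlinarith [hy.1]
      have hee : Real.exp (-b*d) ≤ Real.exp (-b*y) := by
        apply Real.exp_le_exp.2
        nlinarith [hy.1]
      exact mul_le_mul_of_nonneg_right hee hu
    have hsplit1 := hsplit b d ⟨by linarith, hds.le⟩
    have hsplit2 : (∫ y in (0:ℝ)..d, Real.exp (-b*y) * (g y * (y - c)))
        = (∫ y in (0:ℝ)..c, Real.exp (-b*y) * (g y * (y - c)))
          + ∫ y in c..d, Real.exp (-b*y) * (g y * (y - c)) :=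
      (intervalIntegral.integral_add_adjacent_intervals
        ((hcont1 b).intervalIntegrable _ _) ((hcont1 b).intervalIntegrable _ _)).symm
    rw [hsplit1, hsplit2]
    have hed : Real.exp (-b*d) = Real.exp (-b*c) * Real.exp (-b*(d-c)) := by
      rw [← Real.exp_add]; congr 1; ring
    have hkey : M' < Real.exp (-b*(d-c)) * m' := by
      have := (div_lt_iff₀ hm'pos).mp hbexp
      nlinarith
    have hec : 0 < Real.exp (-b*c) := Real.exp_pos _
    nlinarith [mul_lt_mul_of_pos_left hkey hec]
  -- intermediate value theorem
  have h0 : (0:ℝ) ∈ Set.uIcc (J a) (J b) := Set.mem_uIcc.mpr (Or.inl ⟨hJa.le, hJb.le⟩)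
  obtain ⟨κ, -, hκ⟩ := intermediate_value_uIcc (hJcont.continuousOn) h0
  refine ⟨κ, ?_⟩
  have hεI : ε * I κ = 0 := by rw [← hJI, hκ]
  exact (mul_eq_zero.mp hεI).resolve_left hεne
end

section
/- Let n_1 < D be natural numbers and let (a_k)_{k=n_1}^{D} be real numbers such that the polynomial Ψ(x) = Σ_{k=n_1}^{D} a_k x^k factors as Ψ(x) = a_D · x^{n_1} · (x - ρ_0) · ∏_{j=1}^{D-n_1-1} (x + λ_j) with a_D < 0, ρ_0 > 0, and λ_j > 0 for all j. Then there exists a unique κ > 0 such that Σ_{k=n_1}^{D} k! · a_k · κ^{n_1 - k} = 0. -/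
open Real MeasureTheory Set Filter Topology Asymptotics
open scoped ENNReal

lemma aux_int (k : ℕ) {κ : ℝ} (hκ : 0 < κ) :
    IntegrableOn (fun x : ℝ => x ^ k * Real.exp (-(κ * x))) (Ioi 0) := by
  apply integrable_of_isBigO_exp_neg (half_pos hκ)
  · exact (continuous_pow k).continuousOn.mul (Real.continuous_exp.comp (by continuity)).continuousOn
  · have h0 : Tendsto (fun x : ℝ => x ^ k * Real.exp (-(κ/2 * x))) atTop (𝓝 0) := by
      have := tendsto_rpow_mul_exp_neg_mul_atTop_nhds_zero (k : ℝ) (κ/2) (half_pos hκ)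
      refine this.congr' ?_
      filter_upwards [eventually_gt_atTop (0:ℝ)] with x hx
      rw [Real.rpow_natCast, neg_mul]
    rw [isBigO_iff]
    refine ⟨1, ?_⟩
    filter_upwards [h0.eventually (eventually_le_nhds one_pos), eventually_ge_atTop (0:ℝ)]
      with x hx hx0
    have hxk : (0:ℝ) ≤ x ^ k * Real.exp (-(κ/2 * x)) := by positivity
    have heq : x ^ k * Real.exp (-(κ * x)) =
        (x ^ k * Real.exp (-(κ/2 * x))) * Real.exp (-(κ/2) * x) := by
      rw [mul_assoc, ← Real.exp_add]; ring_nf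
    rw [Real.norm_eq_abs, Real.norm_eq_abs, heq, abs_mul, abs_of_nonneg hxk, one_mul,
      abs_of_pos (Real.exp_pos _)]
    exact mul_le_of_le_one_left (Real.exp_pos _).le hx

lemma aux_val (k : ℕ) {κ : ℝ} (hκ : 0 < κ) :
    ∫ x in Ioi (0:ℝ), x ^ k * Real.exp (-(κ * x)) = (Nat.factorial k : ℝ) * κ ^ (-(k:ℤ)-1) := by
  have h := integral_rpow_mul_exp_neg_mul_Ioi (a := (k:ℝ)+1) (r := κ) (by positivity) hκ
  calc ∫ x in Ioi (0:ℝ), x ^ k * Real.exp (-(κ * x))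
      = ∫ t in Ioi (0:ℝ), t ^ ((k:ℝ)+1-1) * Real.exp (-(κ * t)) := by
        refine setIntegral_congr_fun measurableSet_Ioi (fun x hx => ?_)
        simp only [add_sub_cancel_right]
        rw [Real.rpow_natCast]
    _ = (1 / κ) ^ ((k:ℝ)+1) * Real.Gamma ((k:ℝ)+1) := h
    _ = (Nat.factorial k : ℝ) * κ ^ (-(k:ℤ)-1) := by
        rw [Real.Gamma_nat_eq_factorial,
          show ((k:ℝ)+1) = ((k+1:ℕ):ℝ) by push_cast; ring, Real.rpow_natCast,
          one_div, inv_pow, ← zpow_natCast κ (k+1), ← zpow_neg]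
        push_cast
        ring_nf

/-- Descartes's rule of signs argument for the choice of `κ₁` (equation (3.29)):
if `Ψ(x) = ∑_{k=n₁}^D a_k x^k = a_D x^{n₁}(x-ρ₀)∏(x+λⱼ)` with `a_D < 0`, `ρ₀ > 0`
and all `λⱼ > 0`, then there is a unique `κ > 0` with `∑_{k=n₁}^D k! a_k κ^{n₁-k} = 0`. -/
theorem stmt_8 (n1 D : ℕ) (hn : n1 < D) (a : ℕ → ℝ) (ρ0 : ℝ) (hρ0 : 0 < ρ0)
    (lam : ℕ → ℝ) (hlam : ∀ j ∈ Finset.Icc 1 (D - n1 - 1), 0 < lam j)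
    (haD : a D < 0)
    (hfact : ∀ x : ℝ, ∑ k ∈ Finset.Icc n1 D, a k * x ^ k =
      a D * x ^ n1 * (x - ρ0) * ∏ j ∈ Finset.Icc 1 (D - n1 - 1), (x + lam j)) :
    ∃! κ : ℝ, 0 < κ ∧
      ∑ k ∈ Finset.Icc n1 D, (Nat.factorial k : ℝ) * a k * κ ^ ((n1 : ℤ) - (k : ℤ)) = 0 := by
  set P : ℝ → ℝ := fun x => ∏ j ∈ Finset.Icc 1 (D - n1 - 1), (x + lam j) with hPdef
  set Ψ : ℝ → ℝ := fun x => ∑ k ∈ Finset.Icc n1 D, a k * x ^ k with hΨdef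
  set S : ℝ → ℝ := fun κ =>
    ∑ k ∈ Finset.Icc n1 D, (Nat.factorial k : ℝ) * a k * κ ^ ((n1 : ℤ) - (k : ℤ)) with hSdef
  have hP : ∀ x : ℝ, 0 ≤ x → 0 < P x :=
    fun x hx => Finset.prod_pos fun j hj => by linarith [hlam j hj]
  -- sign of Ψ
  have hΨpos : ∀ x : ℝ, 0 < x → x < ρ0 → 0 < Ψ x := by
    intro x hx hxρ
    have h1 : 0 < a D * (x - ρ0) := mul_pos_of_neg_of_neg haD (by linarith)
    have h2 : 0 < x ^ n1 * P x := mul_pos (pow_pos hx _) (hP x hx.le)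
    have : Ψ x = (a D * (x - ρ0)) * (x ^ n1 * P x) := by
      rw [hΨdef]; simp only; rw [hfact x]; ring
    rw [this]; exact mul_pos h1 h2
  have hΨneg : ∀ x : ℝ, ρ0 < x → Ψ x < 0 := by
    intro x hxρ
    have hx : 0 < x := lt_trans hρ0 hxρ
    have h1 : a D * (x - ρ0) < 0 := mul_neg_of_neg_of_pos haD (by linarith)
    have h2 : 0 < x ^ n1 * P x := mul_pos (pow_pos hx _) (hP x hx.le)
    have : Ψ x = (a D * (x - ρ0)) * (x ^ n1 * P x) := by
      rw [hΨdef]; simp only; rw [hfact x]; ring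
    rw [this]; exact mul_neg_of_neg_of_pos h1 h2
  have hΨρ : Ψ ρ0 = 0 := by
    rw [hΨdef]; simp only; rw [hfact ρ0]; ring
  -- a n1 > 0
  have han1 : 0 < a n1 := by
    set u : ℝ → ℝ := fun x => ∑ k ∈ Finset.Icc n1 D, a k * x ^ (k - n1) with hudef
    have key : ∀ x : ℝ, 0 < x → u x = a D * (x - ρ0) * P x := by
      intro x hx
      have hxn : x ^ n1 ≠ 0 := pow_ne_zero _ hx.ne'
      apply mul_right_cancel₀ hxn
      calc u x * x ^ n1 = ∑ k ∈ Finset.Icc n1 D, a k * x ^ k := by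
            rw [hudef]; simp only; rw [Finset.sum_mul]
            refine Finset.sum_congr rfl fun k hk => ?_
            rw [mul_assoc, ← pow_add, Nat.sub_add_cancel (Finset.mem_Icc.1 hk).1]
        _ = a D * x ^ n1 * (x - ρ0) * P x := hfact x
        _ = a D * (x - ρ0) * P x * x ^ n1 := by ring
    have hucont : Continuous u :=
      continuous_finset_sum _ fun k _ => continuous_const.mul (continuous_pow _)
    have hrcont : Continuous (fun x : ℝ => a D * (x - ρ0) * P x) := by
      apply Continuous.mul
      · exact continuous_const.mul (continuous_id.sub continuous_const)
      · exact continuous_finset_prod _ fun j _ => continuous_id.add continuous_const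
    have h1 : Tendsto u (𝓝[>] (0:ℝ)) (𝓝 (u 0)) :=
      (hucont.tendsto 0).mono_left nhdsWithin_le_nhds
    have h2 : Tendsto u (𝓝[>] (0:ℝ)) (𝓝 (a D * (0 - ρ0) * P 0)) := by
      refine ((hrcont.tendsto 0).mono_left nhdsWithin_le_nhds).congr' ?_
      filter_upwards [self_mem_nhdsWithin] with x hx
      exact (key x hx).symm
    have huval : u 0 = a D * (0 - ρ0) * P 0 := tendsto_nhds_unique h1 h2
    have hu0 : u 0 = a n1 := by
      rw [hudef]; simp only
      rw [Finset.sum_eq_single_of_mem n1 (Finset.mem_Icc.2 ⟨le_refl _, hn.le⟩)]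
      · simp
      · intro k hk hkne
        have : n1 < k := lt_of_le_of_ne (Finset.mem_Icc.1 hk).1 (Ne.symm hkne)
        rw [zero_pow (Nat.sub_ne_zero_of_lt this), mul_zero]
    have : a n1 = a D * (0 - ρ0) * P 0 := by rw [← hu0, huval]
    rw [this]
    have : 0 < a D * (0 - ρ0) := mul_pos_of_neg_of_neg haD (by linarith)
    exact mul_pos this (hP 0 le_rfl)
  -- integrability
  have hInt : ∀ {κ : ℝ}, 0 < κ →
      IntegrableOn (fun x => Ψ x * Real.exp (-(κ * x))) (Ioi (0:ℝ)) := by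
    intro κ hκ
    have heq : (fun x : ℝ => Ψ x * Real.exp (-(κ * x)))
        = fun x => ∑ k ∈ Finset.Icc n1 D, a k * (x ^ k * Real.exp (-(κ * x))) := by
      funext x; rw [hΨdef]; simp only [Finset.sum_mul]
      exact Finset.sum_congr rfl fun k _ => by ring
    rw [heq]
    exact integrable_finset_sum _ fun k _ => (aux_int k hκ).const_mul (a k)
  -- value of L
  set L : ℝ → ℝ := fun κ => ∫ x in Ioi (0:ℝ), Ψ x * Real.exp (-(κ * x)) with hLdef
  have hLval : ∀ {κ : ℝ}, 0 < κ →
      L κ = ∑ k ∈ Finset.Icc n1 D, a k * ((Nat.factorial k : ℝ) * κ ^ (-(k:ℤ)-1)) := by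
    intro κ hκ
    have heq : (fun x : ℝ => Ψ x * Real.exp (-(κ * x)))
        = fun x => ∑ k ∈ Finset.Icc n1 D, a k * (x ^ k * Real.exp (-(κ * x))) := by
      funext x; rw [hΨdef]; simp only [Finset.sum_mul]
      exact Finset.sum_congr rfl fun k _ => by ring
    rw [hLdef]; simp only; rw [heq]
    rw [integral_finset_sum _ fun k _ => (aux_int k hκ).const_mul (a k)]
    refine Finset.sum_congr rfl fun k _ => ?_
    rw [integral_const_mul, aux_val k hκ]
  -- S in terms of L
  have hSL : ∀ {κ : ℝ}, 0 < κ → S κ = κ ^ ((n1:ℤ)+1) * L κ := by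
    intro κ hκ
    rw [hLval hκ, hSdef]; simp only; rw [Finset.mul_sum]
    refine Finset.sum_congr rfl fun k _ => ?_
    have : ((n1:ℤ) - k) = ((n1:ℤ)+1) + (-(k:ℤ)-1) := by ring
    rw [this, zpow_add₀ hκ.ne']; ring
  have hLzero : ∀ {κ : ℝ}, 0 < κ → S κ = 0 → L κ = 0 := by
    intro κ hκ hS
    have h := hSL hκ
    rw [hS] at h
    have hκn : κ ^ ((n1:ℤ)+1) ≠ 0 := zpow_ne_zero _ hκ.ne'
    exact (mul_eq_zero.1 h.symm).resolve_left hκn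
  -- strict monotonicity: no two zeros of L
  have hU : ∀ κ1 κ2 : ℝ, 0 < κ1 → κ1 < κ2 → L κ1 = 0 → L κ2 = 0 → False := by
    intro κ1 κ2 hκ1 h12 hL1 hL2
    have hκ2 : 0 < κ2 := lt_trans hκ1 h12
    -- shifted integrals
    have hshift : ∀ {κ : ℝ}, 0 < κ →
        (IntegrableOn (fun x => Ψ x * Real.exp (-(κ * (x - ρ0)))) (Ioi (0:ℝ)) ∧
         ∫ x in Ioi (0:ℝ), Ψ x * Real.exp (-(κ * (x - ρ0))) = Real.exp (κ * ρ0) * L κ) := by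
      intro κ hκ
      have heq : (fun x : ℝ => Ψ x * Real.exp (-(κ * (x - ρ0))))
          = fun x => Real.exp (κ * ρ0) * (Ψ x * Real.exp (-(κ * x))) := by
        funext x; rw [← mul_assoc, mul_comm (Real.exp _), mul_assoc, ← Real.exp_add]
        ring_nf
      constructor
      · rw [heq]; exact (hInt hκ).const_mul _
      · rw [heq, integral_const_mul]
    obtain ⟨hi1, hv1⟩ := hshift hκ1
    obtain ⟨hi2, hv2⟩ := hshift hκ2
    set g : ℝ → ℝ := fun x =>
      Ψ x * (Real.exp (-(κ2 * (x - ρ0))) - Real.exp (-(κ1 * (x - ρ0)))) with hgdef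
    have hgeq : g = fun x =>
        Ψ x * Real.exp (-(κ2 * (x - ρ0))) - Ψ x * Real.exp (-(κ1 * (x - ρ0))) := by
      funext x; rw [hgdef]; ring
    have hgint : IntegrableOn g (Ioi (0:ℝ)) := by rw [hgeq]; exact hi2.sub hi1
    have hgval : ∫ x in Ioi (0:ℝ), g x = 0 := by
      rw [hgeq, integral_sub hi2 hi1, hv1, hv2, hL1, hL2, mul_zero, mul_zero, sub_zero]
    have hgnn : 0 ≤ᵐ[volume.restrict (Ioi (0:ℝ))] g := by
      refine (ae_restrict_iff' measurableSet_Ioi).2 (ae_of_all _ fun x hx => ?_)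
      have hx0 : (0:ℝ) < x := hx
      show (0:ℝ) ≤ g x
      rcases lt_trichotomy x ρ0 with h | h | h
      · have hΨ := hΨpos x hx0 h
        have hexp : Real.exp (-(κ1 * (x - ρ0))) < Real.exp (-(κ2 * (x - ρ0))) := by
          apply Real.exp_lt_exp.2; nlinarith
        rw [hgdef]; exact le_of_lt (mul_pos hΨ (by linarith))
      · rw [hgdef]; simp only; rw [h, hΨρ, zero_mul]
      · have hΨ := hΨneg x h
        have hexp : Real.exp (-(κ2 * (x - ρ0))) < Real.exp (-(κ1 * (x - ρ0))) := by
          apply Real.exp_lt_exp.2; nlinarith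
        rw [hgdef]; exact le_of_lt (mul_pos_of_neg_of_neg hΨ (by linarith))
    have hgpos : 0 < ∫ x in Ioi (0:ℝ), g x := by
      rw [setIntegral_pos_iff_support_of_nonneg_ae hgnn hgint]
      have hsub : Ioo (0:ℝ) ρ0 ⊆ Function.support g ∩ Ioi 0 := by
        intro x hx
        refine ⟨?_, hx.1⟩
        have hΨ := hΨpos x hx.1 hx.2
        have hexp : Real.exp (-(κ1 * (x - ρ0))) < Real.exp (-(κ2 * (x - ρ0))) := by
          apply Real.exp_lt_exp.2; nlinarith [hx.2]
        exact ne_of_gt (mul_pos hΨ (by linarith))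
      calc (0:ℝ≥0∞) < volume (Ioo (0:ℝ) ρ0) := by
            rw [Real.volume_Ioo]; exact ENNReal.ofReal_pos.2 (by linarith)
        _ ≤ volume (Function.support g ∩ Ioi 0) := measure_mono hsub
    rw [hgval] at hgpos
    exact lt_irrefl 0 hgpos
  -- Q polynomial for existence
  set Q : ℝ → ℝ := fun κ =>
    ∑ k ∈ Finset.Icc n1 D, (Nat.factorial k : ℝ) * a k * κ ^ (D - k) with hQdef
  have hQcont : Continuous Q :=
    continuous_finset_sum _ fun k _ => continuous_const.mul (continuous_pow _)
  have hQ0 : Q 0 = (Nat.factorial D : ℝ) * a D := by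
    rw [hQdef]; simp only
    rw [Finset.sum_eq_single_of_mem D (Finset.mem_Icc.2 ⟨hn.le, le_refl _⟩)]
    · simp
    · intro k hk hkne
      have : k < D := lt_of_le_of_ne (Finset.mem_Icc.1 hk).2 hkne
      rw [zero_pow (Nat.sub_ne_zero_of_lt this), mul_zero]
  have hSQ : ∀ {κ : ℝ}, 0 < κ → S κ = κ ^ ((n1:ℤ) - D) * Q κ := by
    intro κ hκ
    rw [hSdef, hQdef]; simp only; rw [Finset.mul_sum]
    refine Finset.sum_congr rfl fun k hk => ?_
    have hkD : k ≤ D := (Finset.mem_Icc.1 hk).2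
    rw [← zpow_natCast κ (D - k), Nat.cast_sub hkD]
    have : ((n1:ℤ) - k) = ((n1:ℤ) - D) + ((D:ℤ) - k) := by ring
    rw [this, zpow_add₀ hκ.ne']; ring
  -- S tends to n1! * a n1 at infinity
  have hStend : Tendsto S atTop (𝓝 ((Nat.factorial n1 : ℝ) * a n1)) := by
    have hterm : ∀ k ∈ Finset.Icc n1 D,
        Tendsto (fun κ : ℝ => (Nat.factorial k : ℝ) * a k * κ ^ ((n1:ℤ) - k)) atTop
          (𝓝 (if k = n1 then (Nat.factorial n1 : ℝ) * a n1 else 0)) := by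
      intro k hk
      rcases eq_or_ne k n1 with rfl | hkne
      · simp only [if_pos rfl, sub_self, zpow_zero, mul_one]
        exact tendsto_const_nhds
      · have hlt : (n1:ℤ) - k < 0 := by
          have : n1 < k := lt_of_le_of_ne (Finset.mem_Icc.1 hk).1 (Ne.symm hkne)
          omega
        have := (tendsto_zpow_atTop_zero hlt).const_mul ((Nat.factorial k : ℝ) * a k)
        simpa [hkne] using this
    have h := tendsto_finset_sum (Finset.Icc n1 D) hterm
    have hsum : (∑ k ∈ Finset.Icc n1 D,
        if k = n1 then (Nat.factorial n1 : ℝ) * a n1 else 0)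
        = (Nat.factorial n1 : ℝ) * a n1 := by
      rw [Finset.sum_ite_eq' (Finset.Icc n1 D) n1 fun _ => (Nat.factorial n1 : ℝ) * a n1]
      rw [if_pos (Finset.mem_Icc.2 ⟨le_refl _, hn.le⟩)]
    rw [hsum] at h
    exact h
  -- existence
  have hpos : 0 < (Nat.factorial n1 : ℝ) * a n1 :=
    mul_pos (by positivity) han1
  obtain ⟨M, hSM, hM0⟩ :=
    ((hStend.eventually (eventually_gt_nhds hpos)).and (eventually_gt_atTop (0:ℝ))).exists
  have hSMpos : 0 < S M := hSM
  have hQM : 0 < Q M := by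
    have h := hSQ hM0
    have hQeq : Q M = M ^ ((D:ℤ) - n1) * S M := by
      rw [h, ← mul_assoc, ← zpow_add₀ hM0.ne']
      norm_num
    rw [hQeq]
    exact mul_pos (zpow_pos hM0 _) hSMpos
  obtain ⟨c, hcmem, hQc⟩ :=
    intermediate_value_Icc hM0.le hQcont.continuousOn
      (show (0:ℝ) ∈ Icc (Q 0) (Q M) from ⟨by rw [hQ0]; nlinarith [Nat.factorial_pos D,
        (by positivity : (0:ℝ) < (Nat.factorial D : ℝ))], hQM.le⟩)
  have hc0 : 0 < c := by
    rcases lt_or_eq_of_le hcmem.1 with h | h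
    · exact h
    · exfalso
      rw [← h] at hQc
      rw [hQ0] at hQc
      nlinarith [(by positivity : (0:ℝ) < (Nat.factorial D : ℝ))]
  have hSc : S c = 0 := by rw [hSQ hc0, hQc, mul_zero]
  -- uniqueness + conclusion
  refine ⟨c, ⟨hc0, hSc⟩, ?_⟩
  rintro y ⟨hy0, hSy⟩
  by_contra hne
  rcases lt_or_gt_of_ne hne with h | h
  · exact hU y c hy0 h (hLzero hy0 hSy) (hLzero hc0 hSc)
  · exact hU c y hc0 h (hLzero hc0 hSc) (hLzero hy0 hSy)
end

section
/- Let q be a nonzero real number, let I ⊆ ℝ be an open interval, and let β : I → ℝ be a positive, twice continuously differentiable function satisfying β(s)·β''(s) - β'(s)²/2 + q²/2 = 0 for all s ∈ I. Then either there exist real constants A_0 ≠ 0 and s_0 with β(s) = A_0 (s + s_0)² - q²/(4 A_0) for all s ∈ I, or there exists a real constant σ with β(s) = q(s + σ) for all s ∈ I, or there exists a real constant σ with β(s) = -q(s + σ) for all s ∈ I. -/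
/-! Along a solution, `(β'² - q²)/β` has vanishing derivative, since its derivative is `β'/β²`
times twice the left-hand side of the equation. Hence `β'² = q² + cβ` for a constant `c`, and
substituting back into the equation gives `β'' = c/2`. So `β = c/4 · s² + Bs + C` with
`B² = q² + cC`: completing the square gives the first alternative when `c ≠ 0`, and `B = ±q`
gives the linear ones when `c = 0`. -/

open Set

section ODE

variable {s : Set ℝ} (hs : IsOpen s) (hs' : IsPreconnected s)
include hs hs'

theorem exists_deriv_sq_eq_sq_add_mul {q : ℝ} {β : ℝ → ℝ} (hβ : DifferentiableOn ℝ β s)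
    (hβ' : DifferentiableOn ℝ (deriv β) s) (hβ0 : ∀ x ∈ s, β x ≠ 0)
    (hode : ∀ x ∈ s, β x * deriv (deriv β) x - deriv β x ^ 2 / 2 + q ^ 2 / 2 = 0) :
    ∃ c : ℝ, ∀ x ∈ s, deriv β x ^ 2 = q ^ 2 + c * β x := by
  have hderiv : ∀ x ∈ s, HasDerivAt (fun x => (deriv β x ^ 2 - q ^ 2) / β x) 0 x := by
    intro x hx
    have hnum := ((hβ'.hasDerivAt (hs.mem_nhds hx)).fun_pow 2).sub_const (q ^ 2)
    refine (hnum.div (hβ.hasDerivAt (hs.mem_nhds hx)) (hβ0 x hx)).congr_deriv ?_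
    rw [div_eq_iff (pow_ne_zero 2 (hβ0 x hx))]
    linear_combination (2 * deriv β x) * hode x hx
  obtain ⟨c, hc⟩ := hs.exists_is_const_of_deriv_eq_zero hs'
    (fun x hx => (hderiv x hx).differentiableAt.differentiableWithinAt)
    (fun x hx => (hderiv x hx).deriv)
  refine ⟨c, fun x hx => ?_⟩
  have hcx := hc x hx
  rw [div_eq_iff (hβ0 x hx)] at hcx
  linarith

theorem exists_eq_quadratic_of_deriv_deriv_eq {f : ℝ → ℝ} (hf : DifferentiableOn ℝ f s)
    (hf' : DifferentiableOn ℝ (deriv f) s) {k : ℝ} (hk : ∀ x ∈ s, deriv (deriv f) x = k) :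
    ∃ B C : ℝ, ∀ x ∈ s, deriv f x = k * x + B ∧ f x = k / 2 * x ^ 2 + B * x + C := by
  obtain ⟨B, hB⟩ := hs.exists_eq_add_of_deriv_eq hs' hf' (g := fun x => k * x)
    (by fun_prop) (fun x hx => by rw [hk x hx, ((hasDerivAt_id' x).const_mul k).deriv, mul_one])
  have hpoly : ∀ x, HasDerivAt (fun x => k / 2 * x ^ 2 + B * x) (k * x + B) x := fun x => by
    refine (((hasDerivAt_pow 2 x).const_mul (k / 2)).fun_add
      ((hasDerivAt_id' x).const_mul B)).congr_deriv ?_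
    ring
  obtain ⟨C, hC⟩ := hs.exists_eq_add_of_deriv_eq hs' hf
    (g := fun x => k / 2 * x ^ 2 + B * x) (by fun_prop)
    (fun x hx => by rw [(hpoly x).deriv, hB hx])
  exact ⟨B, C, fun x hx => ⟨hB hx, hC hx⟩⟩

end ODE

theorem quadratic_eq_completed_square_or_linear {q c B C : ℝ} (hq : q ≠ 0)
    (hrel : B ^ 2 = q ^ 2 + c * C) {s : Set ℝ} {β : ℝ → ℝ}
    (hβ : ∀ x ∈ s, β x = c / 4 * x ^ 2 + B * x + C) :
    (∃ A0 : ℝ, A0 ≠ 0 ∧ ∃ s0 : ℝ, ∀ x ∈ s, β x = A0 * (x + s0) ^ 2 - q ^ 2 / (4 * A0)) ∨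
    (∃ σ : ℝ, ∀ x ∈ s, β x = q * (x + σ)) ∨
    (∃ σ : ℝ, ∀ x ∈ s, β x = -q * (x + σ)) := by
  rcases eq_or_ne c 0 with rfl | hc
  · have hB : (B - q) * (B + q) = 0 := by linear_combination hrel
    rcases mul_eq_zero.mp hB with hB | hB
    · refine Or.inr (Or.inl ⟨C / q, fun x hx => ?_⟩)
      rw [hβ x hx, mul_add, mul_div_cancel₀ _ hq]
      linear_combination x * hB
    · refine Or.inr (Or.inr ⟨-C / q, fun x hx => ?_⟩)
      rw [hβ x hx, mul_add, neg_div, neg_mul_neg, mul_div_cancel₀ _ hq]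
      linear_combination x * hB
  · refine Or.inl ⟨c / 4, by positivity, 2 * B / c, fun x hx => ?_⟩
    rw [hβ x hx]
    field_simp
    linear_combination (-4 : ℝ) * hrel

/-- Classification of positive solutions of `β β'' - (β')²/2 + q²/2 = 0` (equation
(3.15), `μᵢ = 0`) on an open interval: `β` is either the quadratic
`A₀(s+s₀)² - q²/(4A₀)` or one of the linear solutions `±q(s+σ)`. -/
theorem stmt_10 (q : ℝ) (hq : q ≠ 0) (a b : ℝ) (hab : a < b)
    (β : ℝ → ℝ) (hβ : ContDiffOn ℝ 2 β (Set.Ioo a b))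
    (hpos : ∀ s ∈ Set.Ioo a b, 0 < β s)
    (hode : ∀ s ∈ Set.Ioo a b,
      β s * deriv (deriv β) s - (deriv β s) ^ 2 / 2 + q ^ 2 / 2 = 0) :
    (∃ A0 : ℝ, A0 ≠ 0 ∧ ∃ s0 : ℝ,
        ∀ s ∈ Set.Ioo a b, β s = A0 * (s + s0) ^ 2 - q ^ 2 / (4 * A0)) ∨
    (∃ σ : ℝ, ∀ s ∈ Set.Ioo a b, β s = q * (s + σ)) ∨
    (∃ σ : ℝ, ∀ s ∈ Set.Ioo a b, β s = -q * (s + σ)) := by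
  have hβ₁ : DifferentiableOn ℝ β (Ioo a b) := hβ.differentiableOn (by norm_num)
  have hβ₂ : DifferentiableOn ℝ (deriv β) (Ioo a b) :=
    (hβ.deriv_of_isOpen isOpen_Ioo (m := 1) (by norm_num)).differentiableOn (by norm_num)
  obtain ⟨c, hc⟩ :=
    exists_deriv_sq_eq_sq_add_mul isOpen_Ioo isPreconnected_Ioo hβ₁ hβ₂
      (fun x hx => (hpos x hx).ne') hode
  have hβ'' : ∀ x ∈ Ioo a b, deriv (deriv β) x = c / 2 := fun x hx =>
    mul_left_cancel₀ (hpos x hx).ne' (by linear_combination hode x hx + hc x hx / 2)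
  obtain ⟨B, C, hBC⟩ :=
    exists_eq_quadratic_of_deriv_deriv_eq isOpen_Ioo isPreconnected_Ioo hβ₁ hβ₂ hβ''
  have hmid : (a + b) / 2 ∈ Ioo a b := ⟨by linarith, by linarith⟩
  have hrel : B ^ 2 = q ^ 2 + c * C := by
    have hcmid := hc _ hmid
    rw [(hBC _ hmid).1, (hBC _ hmid).2] at hcmid
    linear_combination hcmid
  exact quadratic_eq_completed_square_or_linear hq hrel fun x hx => by
    rw [(hBC x hx).2]
    ring
end

section
/- Let r ≥ 1, let n_1, ..., n_r be natural numbers, let σ_2, ..., σ_r be positive real numbers, and define v(x) = x^{n_1} · ∏_{i=2}^{r} (x + σ_i)^{n_i}. Let κ_1 < 0 and define, for s > 0, α(s) = (2n_1 + 2) · e^{κ_1 s} · v(s)^{-1} · ∫_0^s e^{-κ_1 x} v(x) dx. Then α(s) > 0 for all s > 0 and α(s) tends to -(2n_1+2)/κ_1 as s → +∞. -/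
open Real Filter in
private lemma stmt11_int_exp_mul (k a b : ℝ) (hk : k ≠ 0) :
    ∫ x in a..b, Real.exp (k * x) = (Real.exp (k * b) - Real.exp (k * a)) / k := by
  have h : ∀ x ∈ Set.uIcc a b,
      HasDerivAt (fun y => Real.exp (k * y) / k) (Real.exp (k * x)) x := by
    intro x _
    have h1 : HasDerivAt (fun y : ℝ => k * y) k x := by
      simpa using (hasDerivAt_id x).const_mul k
    have h2 := (Real.hasDerivAt_exp (k * x)).comp x h1
    have h3 := h2.div_const k
    simpa [mul_div_assoc, mul_div_cancel_right₀, hk] using h3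
  rw [intervalIntegral.integral_eq_sub_of_hasDerivAt h
    ((by fun_prop : Continuous fun x : ℝ => Real.exp (k * x)).intervalIntegrable a b)]
  ring

/-- Steady soliton metric coefficient (3.21) with `κ₁ < 0`: `α` is positive on
`(0,∞)` and tends to the positive constant `-(2n₁+2)/κ₁` at infinity
(cigar–paraboloid asymptotics). -/
theorem stmt_11 (r : ℕ) (hr : 1 ≤ r) (n : ℕ → ℕ) (σ : ℕ → ℝ)
    (hσ : ∀ i ∈ Finset.Icc 2 r, 0 < σ i)
    (v : ℝ → ℝ) (hv : ∀ x, v x = x ^ n 1 * ∏ i ∈ Finset.Icc 2 r, (x + σ i) ^ n i)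
    (κ1 : ℝ) (hκ1 : κ1 < 0)
    (α : ℝ → ℝ)
    (hα : ∀ s, α s = (2 * (n 1 : ℝ) + 2) * Real.exp (κ1 * s) * (v s)⁻¹ *
      ∫ x in (0:ℝ)..s, Real.exp (-κ1 * x) * v x) :
    (∀ s : ℝ, 0 < s → 0 < α s) ∧
      Filter.Tendsto α Filter.atTop (nhds (-(2 * (n 1 : ℝ) + 2) / κ1)) := by
  set κ := -κ1 with hκdef
  have hκ : 0 < κ := by simp only [hκdef]; linarith
  have hκ1eq : κ1 = -κ := by rw [hκdef]; ring
  set N := n 1 + ∑ i ∈ Finset.Icc 2 r, n i with hN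
  -- basic properties of v
  have hvc : Continuous v := by
    have h : Continuous fun x : ℝ => x ^ n 1 * ∏ i ∈ Finset.Icc 2 r, (x + σ i) ^ n i := by
      fun_prop
    exact h.congr fun x => (hv x).symm
  have hvpos : ∀ {x : ℝ}, 0 < x → 0 < v x := by
    intro x hx
    rw [hv]
    exact mul_pos (pow_pos hx _)
      (Finset.prod_pos fun i hi => pow_pos (by linarith [hσ i hi]) _)
  have hvnn : ∀ x : ℝ, 0 ≤ x → 0 ≤ v x := by
    intro x hx
    rw [hv]
    exact mul_nonneg (pow_nonneg hx _)
      (Finset.prod_nonneg fun i hi => pow_nonneg (by linarith [hσ i hi]) _)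
  have hvmono : ∀ x s : ℝ, 0 ≤ x → x ≤ s → v x ≤ v s := by
    intro x s hx hxs
    rw [hv, hv]
    refine mul_le_mul (pow_le_pow_left₀ hx hxs _) ?_ ?_ (pow_nonneg (hx.trans hxs) _)
    · refine Finset.prod_le_prod (fun i hi => pow_nonneg (by linarith [hσ i hi]) _) ?_
      intro i hi
      exact pow_le_pow_left₀ (by linarith [hσ i hi]) (by linarith) _
    · exact Finset.prod_nonneg fun i hi => pow_nonneg (by linarith [hσ i hi]) _
  have hratio : ∀ x s : ℝ, 0 ≤ x → x ≤ s → 0 < s → (x / s) ^ N * v s ≤ v x := by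
    intro x s hx hxs hs
    have ht0 : 0 ≤ x / s := div_nonneg hx hs.le
    have ht1 : x / s ≤ 1 := (div_le_one hs).2 hxs
    rw [hv x, hv s]
    have key : (x / s) ^ N * (s ^ n 1 * ∏ i ∈ Finset.Icc 2 r, (s + σ i) ^ n i)
        = x ^ n 1 * ∏ i ∈ Finset.Icc 2 r, ((x / s) * (s + σ i)) ^ n i := by
      have h1 : ((x / s) * s) ^ n 1 = x ^ n 1 := by rw [div_mul_cancel₀ _ hs.ne']
      calc (x / s) ^ N * (s ^ n 1 * ∏ i ∈ Finset.Icc 2 r, (s + σ i) ^ n i)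
          = ((x / s) ^ n 1 * s ^ n 1) *
            ((∏ i ∈ Finset.Icc 2 r, (x / s) ^ n i) *
              ∏ i ∈ Finset.Icc 2 r, (s + σ i) ^ n i) := by
            rw [hN, pow_add, ← Finset.prod_pow_eq_pow_sum]; ring
        _ = x ^ n 1 * ∏ i ∈ Finset.Icc 2 r, ((x / s) * (s + σ i)) ^ n i := by
            rw [← mul_pow, h1, ← Finset.prod_mul_distrib]
            simp [mul_pow]
    rw [key]
    refine mul_le_mul_of_nonneg_left ?_ (pow_nonneg hx _)
    refine Finset.prod_le_prod ?_ ?_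
    · intro i hi
      exact pow_nonneg (mul_nonneg ht0 (by linarith [hσ i hi])) _
    · intro i hi
      have hσi := hσ i hi
      have hbase : (x / s) * (s + σ i) ≤ x + σ i := by
        have h1 : (x / s) * (s + σ i) = x + (x / s) * σ i := by
          field_simp
        have h2 : (x / s) * σ i ≤ σ i := by
          nlinarith
        linarith
      exact pow_le_pow_left₀ (mul_nonneg ht0 (by linarith)) hbase _
  -- integrability
  have hInt : ∀ a b : ℝ, IntervalIntegrable (fun x => Real.exp (κ * x) * v x)
      MeasureTheory.volume a b := by
    intro a b
    exact (((Real.continuous_exp.comp (continuous_const.mul continuous_id)).mul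
      hvc)).intervalIntegrable a b
  have hκne : κ ≠ 0 := hκ.ne'
  -- upper bound
  have hupper : ∀ s : ℝ, 0 < s →
      Real.exp (κ1 * s) * (v s)⁻¹ * (∫ x in (0:ℝ)..s, Real.exp (κ * x) * v x) ≤ 1 / κ := by
    intro s hs
    have hvs := hvpos hs
    have hIle : (∫ x in (0:ℝ)..s, Real.exp (κ * x) * v x) ≤
        v s * ((Real.exp (κ * s) - Real.exp (κ * 0)) / κ) := by
      have h1 : (∫ x in (0:ℝ)..s, Real.exp (κ * x) * v x) ≤
          ∫ x in (0:ℝ)..s, Real.exp (κ * x) * v s := by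
        refine intervalIntegral.integral_mono_on hs.le (hInt 0 s)
          ((by fun_prop : Continuous fun x : ℝ => Real.exp (κ * x) * v s).intervalIntegrable 0 s)
          ?_
        intro x hx
        exact mul_le_mul_of_nonneg_left (hvmono x s hx.1 hx.2) (Real.exp_pos _).le
      have h2 : (∫ x in (0:ℝ)..s, Real.exp (κ * x) * v s)
          = ((Real.exp (κ * s) - Real.exp (κ * 0)) / κ) * v s := by
        rw [intervalIntegral.integral_mul_const, stmt11_int_exp_mul κ 0 s hκne]
      rw [h2] at h1
      linarith [h1]
    calc Real.exp (κ1 * s) * (v s)⁻¹ * (∫ x in (0:ℝ)..s, Real.exp (κ * x) * v x)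
        ≤ Real.exp (κ1 * s) * (v s)⁻¹ *
          (v s * ((Real.exp (κ * s) - Real.exp (κ * 0)) / κ)) := by
          exact mul_le_mul_of_nonneg_left hIle (by positivity)
      _ = (Real.exp (κ1 * s) * Real.exp (κ * s) - Real.exp (κ1 * s) * Real.exp (κ * 0)) / κ := by
          field_simp
      _ ≤ 1 / κ := by
          have e1 : Real.exp (κ1 * s) * Real.exp (κ * s) = 1 := by
            rw [← Real.exp_add, hκ1eq]
            norm_num
          rw [e1]
          have := Real.exp_pos (κ1 * s)
          have := Real.exp_pos (κ * 0)
          gcongr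
          nlinarith
  -- lower bound
  have hlower : ∀ A s : ℝ, 0 < A → A < s →
      ((s - A) / s) ^ N * (1 - Real.exp (-(κ * A))) / κ ≤
        Real.exp (κ1 * s) * (v s)⁻¹ * (∫ x in (0:ℝ)..s, Real.exp (κ * x) * v x) := by
    intro A s hA hAs
    have hs : 0 < s := hA.trans hAs
    have hvs := hvpos hs
    have hsA0 : 0 ≤ s - A := by linarith
    set c : ℝ := ((s - A) / s) ^ N * v s with hc
    have hc0 : 0 ≤ c := by
      apply mul_nonneg _ hvs.le
      exact pow_nonneg (div_nonneg hsA0 hs.le) _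
    have hsplit : (∫ x in (0:ℝ)..s, Real.exp (κ * x) * v x)
        = (∫ x in (0:ℝ)..(s - A), Real.exp (κ * x) * v x) +
          ∫ x in (s - A)..s, Real.exp (κ * x) * v x :=
      (intervalIntegral.integral_add_adjacent_intervals (hInt 0 (s - A)) (hInt (s - A) s)).symm
    have h1 : (0:ℝ) ≤ ∫ x in (0:ℝ)..(s - A), Real.exp (κ * x) * v x := by
      refine intervalIntegral.integral_nonneg hsA0 ?_
      intro x hx
      exact mul_nonneg (Real.exp_pos _).le (hvnn x hx.1)
    have h2 : c * ((Real.exp (κ * s) - Real.exp (κ * (s - A))) / κ) ≤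
        ∫ x in (s - A)..s, Real.exp (κ * x) * v x := by
      have h3 : (∫ x in (s - A)..s, Real.exp (κ * x) * c) ≤
          ∫ x in (s - A)..s, Real.exp (κ * x) * v x := by
        refine intervalIntegral.integral_mono_on (by linarith)
          ((by fun_prop : Continuous fun x : ℝ => Real.exp (κ * x) * c).intervalIntegrable _ _)
          (hInt (s - A) s) ?_
        intro x hx
        refine mul_le_mul_of_nonneg_left ?_ (Real.exp_pos _).le
        have hx0 : 0 ≤ x := le_trans hsA0 hx.1
        have hxr : ((s - A) / s) ^ N ≤ (x / s) ^ N := by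
          refine pow_le_pow_left₀ (div_nonneg hsA0 hs.le) ?_ _
          exact div_le_div_of_nonneg_right hx.1 hs.le
        calc c ≤ (x / s) ^ N * v s := mul_le_mul_of_nonneg_right hxr hvs.le
          _ ≤ v x := hratio x s hx0 hx.2 hs
      have h4 : (∫ x in (s - A)..s, Real.exp (κ * x) * c)
          = ((Real.exp (κ * s) - Real.exp (κ * (s - A))) / κ) * c := by
        rw [intervalIntegral.integral_mul_const, stmt11_int_exp_mul κ (s - A) s hκne]
      rw [h4] at h3
      linarith [h3]
    have hIge : c * ((Real.exp (κ * s) - Real.exp (κ * (s - A))) / κ) ≤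
        ∫ x in (0:ℝ)..s, Real.exp (κ * x) * v x := by
      rw [hsplit]; linarith
    have hmul : Real.exp (κ1 * s) * (v s)⁻¹ *
        (c * ((Real.exp (κ * s) - Real.exp (κ * (s - A))) / κ)) ≤
        Real.exp (κ1 * s) * (v s)⁻¹ * (∫ x in (0:ℝ)..s, Real.exp (κ * x) * v x) :=
      mul_le_mul_of_nonneg_left hIge (by positivity)
    refine le_trans (le_of_eq ?_) hmul
    have e1 : Real.exp (κ1 * s) * Real.exp (κ * s) = 1 := by
      rw [← Real.exp_add, hκ1eq]; norm_num
    have e2 : Real.exp (κ1 * s) * Real.exp (κ * (s - A)) = Real.exp (-(κ * A)) := by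
      rw [← Real.exp_add, hκ1eq]
      congr 1
      ring
    have expand : Real.exp (κ1 * s) * (v s)⁻¹ *
        (c * ((Real.exp (κ * s) - Real.exp (κ * (s - A))) / κ))
        = ((s - A) / s) ^ N *
          (Real.exp (κ1 * s) * Real.exp (κ * s) - Real.exp (κ1 * s) * Real.exp (κ * (s - A))) / κ := by
      rw [hc]
      field_simp
    rw [expand, e1, e2]
  constructor
  · -- positivity
    intro s hs
    rw [hα]
    have hIpos : 0 < ∫ x in (0:ℝ)..s, Real.exp (κ * x) * v x :=
      intervalIntegral.intervalIntegral_pos_of_pos_on (hInt 0 s)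
        (fun x hx => mul_pos (Real.exp_pos _) (hvpos hx.1)) hs
    have hvs := hvpos hs
    have hC : (0:ℝ) < 2 * (n 1 : ℝ) + 2 := by positivity
    exact mul_pos (mul_pos (mul_pos hC (Real.exp_pos _)) (inv_pos.2 hvs)) hIpos
  · -- the limit
    have hg : Filter.Tendsto
        (fun s => Real.exp (κ1 * s) * (v s)⁻¹ * ∫ x in (0:ℝ)..s, Real.exp (κ * x) * v x)
        Filter.atTop (nhds (1 / κ)) := by
      rw [Metric.tendsto_atTop]
      intro ε hε
      -- choose A
      have hexp : Filter.Tendsto (fun A : ℝ => Real.exp (-(κ * A)) / κ)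
          Filter.atTop (nhds 0) := by
        have h1 : Filter.Tendsto (fun A : ℝ => κ * A) Filter.atTop Filter.atTop :=
          Filter.tendsto_id.const_mul_atTop hκ
        have h2 := (Real.tendsto_exp_neg_atTop_nhds_zero.comp h1).div_const κ
        simpa using h2
      obtain ⟨A, hAS⟩ := ((hexp.eventually_lt_const (half_pos hε)).and
        (Filter.eventually_gt_atTop 0)).exists
      obtain ⟨hAε, hA0⟩ := hAS
      -- the lower comparison function tends to (1 - exp(-(κ A)))/κ
      have hb : Filter.Tendsto (fun s : ℝ => (s - A) / s) Filter.atTop (nhds 1) := by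
        have h1 : Filter.Tendsto (fun s : ℝ => 1 - A / s) Filter.atTop (nhds 1) := by
          have := (tendsto_const_nhds (x := A) (f := Filter.atTop (α := ℝ))).div_atTop
            Filter.tendsto_id
          simpa using tendsto_const_nhds.sub this
        refine h1.congr' ?_
        filter_upwards [Filter.eventually_gt_atTop (0:ℝ)] with s hs
        field_simp
      have h2 : Filter.Tendsto
          (fun s : ℝ => ((s - A) / s) ^ N * (1 - Real.exp (-(κ * A))) / κ)
          Filter.atTop (nhds ((1 - Real.exp (-(κ * A))) / κ)) := by
        have := ((hb.pow N).mul_const (1 - Real.exp (-(κ * A)))).div_const κ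
        simpa using this
      have hLA : 1 / κ - ε < (1 - Real.exp (-(κ * A))) / κ := by
        have : (1 - Real.exp (-(κ * A))) / κ = 1 / κ - Real.exp (-(κ * A)) / κ := by ring
        rw [this]
        linarith
      have h3 := h2.eventually_const_lt hLA
      rw [Filter.eventually_atTop] at h3
      obtain ⟨S, hS⟩ := h3
      refine ⟨max S (A + 1), fun s hs => ?_⟩
      have hs1 : S ≤ s := le_trans (le_max_left _ _) hs
      have hs2 : A < s := by
        have := le_trans (le_max_right _ _) hs
        linarith
      have hs0 : 0 < s := hA0.trans hs2
      have hlo := hlower A s hA0 hs2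
      have hhi := hupper s hs0
      have hSs := hS s hs1
      rw [Real.dist_eq, abs_lt]
      constructor <;> [linarith; linarith]
    have hαeq : ∀ s, α s = (2 * (n 1 : ℝ) + 2) *
        (Real.exp (κ1 * s) * (v s)⁻¹ * ∫ x in (0:ℝ)..s, Real.exp (κ * x) * v x) := by
      intro s
      rw [hα]
      ring
    have hfin := hg.const_mul (2 * (n 1 : ℝ) + 2)
    have hval : (2 * (n 1 : ℝ) + 2) * (1 / κ) = -(2 * (n 1 : ℝ) + 2) / κ1 := by
      rw [hκ1eq, neg_div_neg_eq, mul_one_div]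
    rw [hval] at hfin
    exact hfin.congr fun s => (hαeq s).symm
end

section
/- Let r ≥ 1, let n_1, ..., n_r be natural numbers, let σ_2, ..., σ_r be positive real numbers, and define v(x) = x^{n_1} · ∏_{i=2}^{r} (x + σ_i)^{n_i}. Let κ_1 < 0 and define, for s > 0, α(s) = e^{κ_1 s} · v(s)^{-1} · ∫_0^s (x + 2n_1 + 2) · e^{-κ_1 x} v(x) dx. Then α(s) > 0 for all s > 0 and α(s)/s tends to -1/κ_1 as s → +∞. -/
/-!
For `κ ≠ 0` and a polynomial `P`, the terminating series `g = -∑ₖ κ^{-(k+1)} P^{(k)}` solves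
`g' - κ g = P`, so `e^{-κx} g(x)` is an antiderivative of `e^{-κx} P(x)`. With `P = (X + c) v` this
gives `α(s) = (g(s) - e^{κs} g(0)) / v(s)`, and `α(s)/s` is `g(s) / (s v(s))` up to a term killed by
`e^{κs} → 0`. Both `g` and `X v` have the degree of `P`, with leading coefficients `-κ⁻¹` and `1`.
-/

open Polynomial Filter Real Topology

namespace Polynomial

section Algebraic

variable {K : Type*} [Field K]

/-- The polynomial `g` with `g' - κ g = P`, so that `e^{-κx} g(x)` is an antiderivative of
`e^{-κx} P(x)`. -/
noncomputable def expMulAntideriv (κ : K) (P : K[X]) : K[X] :=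
  -∑ k ∈ Finset.range (P.natDegree + 1), C (κ⁻¹ ^ (k + 1)) * derivative^[k] P

theorem derivative_expMulAntideriv_sub {κ : K} (hκ : κ ≠ 0) (P : K[X]) :
    derivative (expMulAntideriv κ P) - C κ * expMulAntideriv κ P = P := by
  have h_shift : C κ * expMulAntideriv κ P =
      -∑ k ∈ Finset.range (P.natDegree + 1), C (κ⁻¹ ^ k) * derivative^[k] P := by
    rw [expMulAntideriv, mul_neg, Finset.mul_sum]
    congr 1
    refine Finset.sum_congr rfl fun k _ => ?_
    rw [← mul_assoc, ← C_mul, pow_succ, mul_left_comm, mul_inv_cancel₀ hκ, mul_one]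
  have h_top : derivative^[P.natDegree + 1] P = 0 := iterate_derivative_eq_zero (Nat.lt_succ_self _)
  rw [h_shift, expMulAntideriv, derivative_neg, derivative_sum, neg_sub_neg,
    ← Finset.sum_sub_distrib]
  simp_rw [derivative_C_mul, ← Function.iterate_succ_apply' derivative]
  rw [Finset.sum_range_sub' (fun k => C (κ⁻¹ ^ k) * derivative^[k] P), h_top]
  simp

theorem natDegree_expMulAntideriv_le (κ : K) (P : K[X]) :
    (expMulAntideriv κ P).natDegree ≤ P.natDegree := by
  rw [expMulAntideriv, natDegree_neg]
  refine natDegree_sum_le_of_forall_le _ _ fun k _ => ?_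
  exact (natDegree_C_mul_le _ _).trans ((natDegree_iterate_derivative P k).trans (Nat.sub_le _ _))

theorem coeff_expMulAntideriv_natDegree (κ : K) (P : K[X]) :
    (expMulAntideriv κ P).coeff P.natDegree = -κ⁻¹ * P.leadingCoeff := by
  rw [expMulAntideriv, coeff_neg, finsetSum_coeff, Finset.sum_eq_single 0]
  · rw [Function.iterate_zero_apply, coeff_C_mul, pow_one, coeff_natDegree, neg_mul]
  · intro k hk hk0
    rw [Finset.mem_range] at hk
    rw [coeff_C_mul, coeff_eq_zero_of_natDegree_lt, mul_zero]
    exact (natDegree_iterate_derivative P k).trans_lt (by omega)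
  · simp

theorem degree_expMulAntideriv {κ : K} (hκ : κ ≠ 0) (P : K[X]) :
    (expMulAntideriv κ P).degree = P.degree := by
  rcases eq_or_ne P 0 with rfl | hP
  · simp [expMulAntideriv]
  rw [degree_eq_natDegree hP]
  refine degree_eq_of_le_of_coeff_ne_zero
    (degree_le_of_natDegree_le (natDegree_expMulAntideriv_le κ P)) ?_
  rw [coeff_expMulAntideriv_natDegree]
  simp [hκ, hP]

theorem leadingCoeff_expMulAntideriv {κ : K} (hκ : κ ≠ 0) (P : K[X]) :
    (expMulAntideriv κ P).leadingCoeff = -κ⁻¹ * P.leadingCoeff := by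
  rw [leadingCoeff, natDegree_eq_natDegree (degree_expMulAntideriv hκ P),
    coeff_expMulAntideriv_natDegree]

end Algebraic

theorem hasDerivAt_exp_mul_eval_expMulAntideriv {κ : ℝ} (hκ : κ ≠ 0) (P : ℝ[X]) (x : ℝ) :
    HasDerivAt (fun t => exp (-κ * t) * (expMulAntideriv κ P).eval t)
      (exp (-κ * x) * P.eval x) x := by
  have h_exp : HasDerivAt (fun t => exp (-κ * t)) (exp (-κ * x) * -κ) x :=
    ((hasDerivAt_id x).const_mul (-κ)).exp.congr_deriv (by simp)
  refine (h_exp.mul ((expMulAntideriv κ P).hasDerivAt x)).congr_deriv ?_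
  have h_ode := congrArg (eval x) (derivative_expMulAntideriv_sub hκ P)
  rw [eval_sub, eval_mul, eval_C] at h_ode
  rw [← h_ode]
  ring

theorem integral_exp_mul_eval {κ : ℝ} (hκ : κ ≠ 0) (P : ℝ[X]) (a b : ℝ) :
    ∫ x in a..b, exp (-κ * x) * P.eval x =
      exp (-κ * b) * (expMulAntideriv κ P).eval b -
        exp (-κ * a) * (expMulAntideriv κ P).eval a :=
  intervalIntegral.integral_eq_sub_of_hasDerivAt
    (fun x _ => hasDerivAt_exp_mul_eval_expMulAntideriv hκ P x)
    (Continuous.intervalIntegrable (by fun_prop) a b)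

theorem tendsto_exp_mul_div_eval {κ : ℝ} (hκ : κ < 0) (a : ℝ) (Q : ℝ[X]) :
    Tendsto (fun s => exp (κ * s) * (a / Q.eval s)) atTop (𝓝 0) := by
  have h_exp : Tendsto (fun s => exp (κ * s)) atTop (𝓝 0) :=
    tendsto_exp_atBot.comp (tendsto_id.const_mul_atTop_of_neg hκ)
  rcases lt_or_ge 0 Q.degree with hQ | hQ
  · simpa using h_exp.mul (div_tendsto_atTop_zero_of_degree_lt (C a) Q (degree_C_le.trans_lt hQ))
  · rw [eq_C_of_degree_le_zero hQ]
    simpa using h_exp.mul_const (a / Q.coeff 0)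

theorem tendsto_exp_mul_integral_exp_mul_eval_div {κ : ℝ} (hκ : κ < 0) (a : ℝ) {P Q : ℝ[X]}
    (hPQ : P.degree = Q.degree) :
    Tendsto (fun s => exp (κ * s) * (∫ x in a..s, exp (-κ * x) * P.eval x) / Q.eval s) atTop
      (𝓝 (-κ⁻¹ * P.leadingCoeff / Q.leadingCoeff)) := by
  have h_main : Tendsto (fun s => (expMulAntideriv κ P).eval s / Q.eval s) atTop
      (𝓝 (-κ⁻¹ * P.leadingCoeff / Q.leadingCoeff)) := by
    rw [← leadingCoeff_expMulAntideriv hκ.ne]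
    exact div_tendsto_atTop_leadingCoeff_div_of_degree_eq _ Q
      ((degree_expMulAntideriv hκ.ne P).trans hPQ)
  have h_rest := tendsto_exp_mul_div_eval hκ (exp (-κ * a) * (expMulAntideriv κ P).eval a) Q
  have h_lim := h_main.sub h_rest
  rw [sub_zero] at h_lim
  refine h_lim.congr fun s => ?_
  rw [integral_exp_mul_eval hκ.ne, mul_sub, ← mul_assoc, ← exp_add,
    show κ * s + -κ * s = 0 by ring, exp_zero, one_mul]
  ring

end Polynomial

theorem stmt_12_general (r : ℕ) (n : ℕ → ℕ) (σ : ℕ → ℝ)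
    (hσ : ∀ i ∈ Finset.Icc 2 r, 0 < σ i)
    (v : ℝ → ℝ) (hv : ∀ x, v x = x ^ n 1 * ∏ i ∈ Finset.Icc 2 r, (x + σ i) ^ n i)
    (κ1 : ℝ) (hκ1 : κ1 < 0)
    (α : ℝ → ℝ)
    (hα : ∀ s, α s = Real.exp (κ1 * s) * (v s)⁻¹ *
      ∫ x in (0:ℝ)..s, (x + 2 * (n 1 : ℝ) + 2) * Real.exp (-κ1 * x) * v x) :
    (∀ s : ℝ, 0 < s → 0 < α s) ∧
      Filter.Tendsto (fun s => α s / s) Filter.atTop (nhds (-1 / κ1)) := by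
  obtain ⟨V, hV_monic, hV_eval⟩ : ∃ V : ℝ[X], V.Monic ∧ ∀ x, V.eval x = v x :=
    ⟨X ^ n 1 * ∏ i ∈ Finset.Icc 2 r, (X + C (σ i)) ^ n i,
      (monic_X_pow _).mul (monic_prod_of_monic _ _ fun i _ => (monic_X_add_C _).pow _),
      fun x => by simp [hv, eval_prod]⟩
  have hv_pos (x : ℝ) (hx : 0 < x) : 0 < v x := by
    rw [hv]
    exact mul_pos (pow_pos hx _) (Finset.prod_pos fun i hi => pow_pos (by linarith [hσ i hi]) _)
  set P : ℝ[X] := (X + C (2 * (n 1 : ℝ) + 2)) * V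
  have h_integrand (x : ℝ) :
      (x + 2 * (n 1 : ℝ) + 2) * exp (-κ1 * x) * v x = exp (-κ1 * x) * P.eval x := by
    simp only [P, eval_mul, eval_add, eval_X, eval_C, hV_eval]
    ring
  simp only [h_integrand] at hα
  refine ⟨fun s hs => ?_, ?_⟩
  · rw [hα]
    refine mul_pos (mul_pos (exp_pos _) (inv_pos.2 (hv_pos s hs))) ?_
    refine intervalIntegral.intervalIntegral_pos_of_pos_on
      (Continuous.intervalIntegrable (by fun_prop) _ _) (fun x hx => ?_) hs
    rw [← h_integrand]
    exact mul_pos (mul_pos (by linarith [hx.1, (n 1).cast_nonneg (α := ℝ)]) (exp_pos _))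
      (hv_pos x hx.1)
  · have h_deg : P.degree = (X * V).degree := by
      rw [degree_mul, degree_mul, degree_X_add_C, degree_X]
    have h_lim := tendsto_exp_mul_integral_exp_mul_eval_div hκ1 0 h_deg
    rw [leadingCoeff_mul, leadingCoeff_mul, leadingCoeff_X_add_C, leadingCoeff_X,
      hV_monic.leadingCoeff, show -κ1⁻¹ * (1 * 1) / (1 * 1) = -1 / κ1 by ring] at h_lim
    refine h_lim.congr fun s => ?_
    rw [hα, eval_mul, eval_X, hV_eval]
    ring

/-- Expanding soliton metric coefficient with `κ₁ < 0`: `α` is positive on `(0,∞)`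
and grows linearly, `α(s)/s → -1/κ₁` (asymptotically conical end). -/
theorem stmt_12 (r : ℕ) (hr : 1 ≤ r) (n : ℕ → ℕ) (σ : ℕ → ℝ)
    (hσ : ∀ i ∈ Finset.Icc 2 r, 0 < σ i)
    (v : ℝ → ℝ) (hv : ∀ x, v x = x ^ n 1 * ∏ i ∈ Finset.Icc 2 r, (x + σ i) ^ n i)
    (κ1 : ℝ) (hκ1 : κ1 < 0)
    (α : ℝ → ℝ)
    (hα : ∀ s, α s = Real.exp (κ1 * s) * (v s)⁻¹ *
      ∫ x in (0:ℝ)..s, (x + 2 * (n 1 : ℝ) + 2) * Real.exp (-κ1 * x) * v x) :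
    (∀ s : ℝ, 0 < s → 0 < α s) ∧
      Filter.Tendsto (fun s => α s / s) Filter.atTop (nhds (-1 / κ1)) :=
  stmt_12_general r n σ hσ v hv κ1 hκ1 α hα
end

section
/- Let r ≥ 1, let n_1, ..., n_r be natural numbers, and let q_1, ..., q_r be nonzero reals, p_1, ..., p_r, σ_1, ..., σ_r, ε, κ_0, κ_1, E^* real numbers satisfying E^* = ε σ_i - 2 p_i / q_i for every i. Let J ⊆ ℝ be an open interval on which β_i(s) := -q_i (s + σ_i) > 0 for all i; set v(s) = ∏_{i=1}^r β_i(s)^{n_i} and φ(s) = κ_1 (s + κ_0). Suppose α : J → ℝ is twice differentiable and satisfies α'(s) + α(s)·(v'(s)/v(s) - κ_1) = ε s + E^* on J. Then for all s ∈ J and all i: (a) (α'/2)(β_i'/β_i) + (α/2)(β_i''/β_i - (β_i'/β_i)²) + (α/2)(β_i'/β_i)(v'/v) - (α/2)(β_i'/β_i) φ' - p_i/β_i + q_i² α/(2 β_i²) = ε/2; (b) α''/2 + (α'/2)(v'/v) - (α'/2) φ' - (α/2) Σ_{i=1}^r n_i q_i²/β_i² = ε/2; (c) α''/2 + (α'/2)(v'/v)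 + α Σ_{i=1}^r n_i (β_i''/β_i - (1/2)(β_i'/β_i)²) - α φ'' - (α'/2) φ' = ε/2; (d) α φ'' + α' φ' + α φ' (v'/v) - α (φ')² - ε φ = κ_1 E^* - ε κ_1 κ_0. -/
/-!
Since `βᵢ` and `φ` are affine, `βᵢ'' = φ'' = 0`, and `v'/v = Σ nᵢ βᵢ'/βᵢ` has derivative
`-Σ nᵢ qᵢ²/βᵢ²`. Differentiating the first-order ODE therefore expresses `α''` through `α` and
`α'`, which turns (b) into an identity; (c) reduces to (b) because
`Σ nᵢ (βᵢ''/βᵢ - ½ (βᵢ'/βᵢ)²) = -½ Σ nᵢ qᵢ²/βᵢ²`. Equations (a) and (d) are the ODE itself,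
multiplied by `-qᵢ/(2βᵢ)` and by `κ₁`; in (a) the leftover constant vanishes exactly by the
consistency condition `E* = ε σᵢ - 2 pᵢ/qᵢ`.
-/

open Finset Filter Topology

section Affine

variable (c d t : ℝ)

theorem hasDerivAt_mul_add : HasDerivAt (fun s => c * (s + d)) c t := by
  simpa using ((hasDerivAt_id t).add_const d).const_mul c

theorem deriv_mul_add : deriv (fun s => c * (s + d)) = fun _ => c :=
  funext fun t => (hasDerivAt_mul_add c d t).deriv

theorem deriv_deriv_mul_add : deriv (deriv fun s => c * (s + d)) t = 0 := by
  rw [deriv_mul_add, deriv_const]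

theorem logDeriv_mul_add : logDeriv (fun s => c * (s + d)) = fun t => c / (c * (t + d)) := by
  ext t
  rw [logDeriv_apply, deriv_mul_add]

variable {c d t}

theorem hasDerivAt_logDeriv_mul_add (h : c * (t + d) ≠ 0) :
    HasDerivAt (logDeriv fun s => c * (s + d)) (-(c ^ 2 / (c * (t + d)) ^ 2)) t := by
  rw [logDeriv_mul_add]
  simp only [div_eq_mul_inv]
  exact (((hasDerivAt_mul_add c d t).inv h).const_mul c).congr_deriv (by ring)

end Affine

theorem logDeriv_prod_pow {ι : Type*} {S : Finset ι} {f : ι → ℝ → ℝ} {x : ℝ} (n : ι → ℕ)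
    (hf : ∀ i ∈ S, f i x ≠ 0) (hd : ∀ i ∈ S, DifferentiableAt ℝ (f i) x) :
    logDeriv (fun y => ∏ i ∈ S, f i y ^ n i) x = ∑ i ∈ S, n i * logDeriv (f i) x := by
  rw [logDeriv_prod (f := fun i y => f i y ^ n i) (fun i hi => pow_ne_zero _ (hf i hi))
    fun i hi => (hd i hi).pow _]
  exact sum_congr rfl fun i hi => logDeriv_fun_pow (hd i hi) _

theorem hasDerivAt_logDeriv_prod_pow_mul_add {ι : Type*} {S : Finset ι} {c d : ι → ℝ}
    (n : ι → ℕ) {t : ℝ} (h : ∀ j ∈ S, c j * (t + d j) ≠ 0) :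
    HasDerivAt (logDeriv fun y => ∏ j ∈ S, (c j * (y + d j)) ^ n j)
      (-∑ j ∈ S, n j * c j ^ 2 / (c j * (t + d j)) ^ 2) t := by
  have hne : ∀ᶠ y in 𝓝 t, ∀ j ∈ S, c j * (y + d j) ≠ 0 :=
    (eventually_all_finset S).2 fun j hj =>
      (hasDerivAt_mul_add (c j) (d j) t).continuousAt.eventually_ne (h j hj)
  have hsum : (logDeriv fun y => ∏ j ∈ S, (c j * (y + d j)) ^ n j)
      =ᶠ[𝓝 t] fun y => ∑ j ∈ S, n j * logDeriv (fun x => c j * (x + d j)) y :=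
    hne.mono fun y hy =>
      logDeriv_prod_pow n hy fun j _ => (hasDerivAt_mul_add _ _ y).differentiableAt
  refine HasDerivAt.congr_of_eventuallyEq ?_ hsum
  simpa only [mul_neg, sum_neg_distrib, mul_div_assoc] using
    HasDerivAt.fun_sum fun j hj => (hasDerivAt_logDeriv_mul_add (h j hj)).const_mul (n j : ℝ)

theorem deriv_deriv_of_linear_ode {α W : ℝ → ℝ} {s ε E κ W' : ℝ}
    (hα : DifferentiableAt ℝ α s) (hW : HasDerivAt W W' s)
    (hode : ∀ᶠ t in 𝓝 s, deriv α t + α t * (W t - κ) = ε * t + E) :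
    deriv (deriv α) s = ε - deriv α s * (W s - κ) - α s * W' := by
  have hα' : deriv α =ᶠ[𝓝 s] fun t => ε * t + E - α t * (W t - κ) :=
    hode.mono fun t ht => by simp only; linarith
  rw [hα'.deriv_eq]
  have hlin : HasDerivAt (fun t => ε * t + E) ε s := by
    simpa using ((hasDerivAt_id s).const_mul ε).add_const E
  exact (hlin.sub (hα.hasDerivAt.mul (hW.sub_const κ))).deriv.trans (by ring)

theorem stmt_15_general (r : ℕ) (n : ℕ → ℕ) (q p σ : ℕ → ℝ)
    (ε κ0 κ1 E : ℝ)
    (hconsist : ∀ i ∈ Finset.Icc 1 r, E = ε * σ i - 2 * p i / q i)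
    (a b : ℝ)
    (β : ℕ → ℝ → ℝ) (hβ : ∀ i, β i = fun s => -q i * (s + σ i))
    (hβpos : ∀ i ∈ Finset.Icc 1 r, ∀ s ∈ Set.Ioo a b, 0 < β i s)
    (v : ℝ → ℝ) (hv : v = fun s => ∏ i ∈ Finset.Icc 1 r, (β i s) ^ n i)
    (φ : ℝ → ℝ) (hφ : φ = fun s => κ1 * (s + κ0))
    (α : ℝ → ℝ)
    (hα1 : ∀ s ∈ Set.Ioo a b, DifferentiableAt ℝ α s)
    (hode : ∀ s ∈ Set.Ioo a b,
      deriv α s + α s * (deriv v s / v s - κ1) = ε * s + E) :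
    ∀ s ∈ Set.Ioo a b, ∀ i ∈ Finset.Icc 1 r,
      ((deriv α s / 2) * (deriv (β i) s / β i s)
          + (α s / 2) * (deriv (deriv (β i)) s / β i s - (deriv (β i) s / β i s) ^ 2)
          + (α s / 2) * (deriv (β i) s / β i s) * (deriv v s / v s)
          - (α s / 2) * (deriv (β i) s / β i s) * deriv φ s
          - p i / β i s + q i ^ 2 * α s / (2 * (β i s) ^ 2) = ε / 2) ∧
      (deriv (deriv α) s / 2 + (deriv α s / 2) * (deriv v s / v s)
          - (deriv α s / 2) * deriv φ s
          - (α s / 2) * ∑ j ∈ Finset.Icc 1 r, (n j : ℝ) * q j ^ 2 / (β j s) ^ 2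
          = ε / 2) ∧
      (deriv (deriv α) s / 2 + (deriv α s / 2) * (deriv v s / v s)
          + α s * ∑ j ∈ Finset.Icc 1 r, (n j : ℝ) *
              (deriv (deriv (β j)) s / β j s - (1 / 2) * (deriv (β j) s / β j s) ^ 2)
          - α s * deriv (deriv φ) s - (deriv α s / 2) * deriv φ s = ε / 2) ∧
      (α s * deriv (deriv φ) s + deriv α s * deriv φ s
          + α s * deriv φ s * (deriv v s / v s) - α s * (deriv φ s) ^ 2 - ε * φ s
          = κ1 * E - ε * κ1 * κ0) := by
  intro s hs i hi
  have hβ' (j : ℕ) : deriv (β j) = fun _ => -q j := by rw [hβ, deriv_mul_add]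
  have hβ'' (j : ℕ) : deriv (deriv (β j)) s = 0 := by rw [hβ, deriv_deriv_mul_add]
  have hφ' : deriv φ = fun _ => κ1 := by rw [hφ, deriv_mul_add]
  have hφ'' : deriv (deriv φ) s = 0 := by rw [hφ, deriv_deriv_mul_add]
  have hβs (j : ℕ) : β j s = -q j * (s + σ j) := by rw [hβ]
  have hv' : v = fun y => ∏ j ∈ Icc 1 r, (-q j * (y + σ j)) ^ n j := by simp only [hv, hβ]
  have hα'' : deriv (deriv α) s = ε - deriv α s * (deriv v s / v s - κ1)
      + α s * ∑ j ∈ Icc 1 r, (n j : ℝ) * q j ^ 2 / β j s ^ 2 := by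
    have hne (j : ℕ) (hj : j ∈ Icc 1 r) := hβs j ▸ (hβpos j hj s hs).ne'
    refine (deriv_deriv_of_linear_ode (ε := ε) (E := E) (κ := κ1) (hα1 s hs)
      (hv' ▸ hasDerivAt_logDeriv_prod_pow_mul_add n hne) ?_).trans ?_
    · filter_upwards [isOpen_Ioo.mem_nhds hs] using hode
    · simp only [hβs, neg_sq, logDeriv_apply]
      ring
  refine ⟨?_, ?_, ?_, ?_⟩
  · obtain ⟨hqi, hsσ⟩ := mul_ne_zero_iff.mp (hβs i ▸ (hβpos i hi s hs).ne')
    rw [neg_ne_zero] at hqi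
    rw [hβ'' i, hβ' i, hφ', hβs i, eq_sub_of_add_eq (hode s hs), hconsist i hi]
    field_simp
    ring
  · rw [hα'', hφ']
    ring
  · have hsum : ∑ j ∈ Icc 1 r, (n j : ℝ) *
        (deriv (deriv (β j)) s / β j s - (1 / 2) * (deriv (β j) s / β j s) ^ 2)
        = -(1 / 2) * ∑ j ∈ Icc 1 r, (n j : ℝ) * q j ^ 2 / β j s ^ 2 := by
      rw [mul_sum]
      exact sum_congr rfl fun j _ => by rw [hβ'' j, hβ' j]; ring
    rw [hsum, hφ'', hα'', hφ']
    ring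
  · rw [hφ'', hφ', hφ]
    linear_combination κ1 * hode s hs

/-- The Kähler ansatz solves the full gradient Ricci soliton system:
with `βᵢ(s) = -qᵢ(s+σᵢ) > 0`, `v = ∏ βᵢ^{nᵢ}`, `φ(s) = κ₁(s+κ₀)`, the consistency
conditions `E* = ε σᵢ - 2pᵢ/qᵢ`, and `α` solving the first-order linear ODE
`α' + α (v'/v - κ₁) = ε s + E*`, equations (3.10)–(3.12) ((a)–(c)) and the first
integral (3.13) ((d)) all hold. -/
theorem stmt_15 (r : ℕ) (hr : 1 ≤ r) (n : ℕ → ℕ) (q p σ : ℕ → ℝ)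
    (hq : ∀ i ∈ Finset.Icc 1 r, q i ≠ 0)
    (ε κ0 κ1 E : ℝ)
    (hconsist : ∀ i ∈ Finset.Icc 1 r, E = ε * σ i - 2 * p i / q i)
    (a b : ℝ) (hab : a < b)
    (β : ℕ → ℝ → ℝ) (hβ : ∀ i, β i = fun s => -q i * (s + σ i))
    (hβpos : ∀ i ∈ Finset.Icc 1 r, ∀ s ∈ Set.Ioo a b, 0 < β i s)
    (v : ℝ → ℝ) (hv : v = fun s => ∏ i ∈ Finset.Icc 1 r, (β i s) ^ n i)
    (φ : ℝ → ℝ) (hφ : φ = fun s => κ1 * (s + κ0))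
    (α : ℝ → ℝ)
    (hα1 : ∀ s ∈ Set.Ioo a b, DifferentiableAt ℝ α s)
    (hα2 : ∀ s ∈ Set.Ioo a b, DifferentiableAt ℝ (deriv α) s)
    (hode : ∀ s ∈ Set.Ioo a b,
      deriv α s + α s * (deriv v s / v s - κ1) = ε * s + E) :
    ∀ s ∈ Set.Ioo a b, ∀ i ∈ Finset.Icc 1 r,
      ((deriv α s / 2) * (deriv (β i) s / β i s)
          + (α s / 2) * (deriv (deriv (β i)) s / β i s - (deriv (β i) s / β i s) ^ 2)
          + (α s / 2) * (deriv (β i) s / β i s) * (deriv v s / v s)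
          - (α s / 2) * (deriv (β i) s / β i s) * deriv φ s
          - p i / β i s + q i ^ 2 * α s / (2 * (β i s) ^ 2) = ε / 2) ∧
      (deriv (deriv α) s / 2 + (deriv α s / 2) * (deriv v s / v s)
          - (deriv α s / 2) * deriv φ s
          - (α s / 2) * ∑ j ∈ Finset.Icc 1 r, (n j : ℝ) * q j ^ 2 / (β j s) ^ 2
          = ε / 2) ∧
      (deriv (deriv α) s / 2 + (deriv α s / 2) * (deriv v s / v s)
          + α s * ∑ j ∈ Finset.Icc 1 r, (n j : ℝ) *
              (deriv (deriv (β j)) s / β j s - (1 / 2) * (deriv (β j) s / β j s) ^ 2)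
          - α s * deriv (deriv φ) s - (deriv α s / 2) * deriv φ s = ε / 2) ∧
      (α s * deriv (deriv φ) s + deriv α s * deriv φ s
          + α s * deriv φ s * (deriv v s / v s) - α s * (deriv φ s) ^ 2 - ε * φ s
          = κ1 * E - ε * κ1 * κ0) :=
  stmt_15_general r n q p σ ε κ0 κ1 E hconsist a b β hβ hβpos v hv φ hφ α hα1 hode
end

section
/- Let r ≥ 1, let n_1, ..., n_r be natural numbers with n_1 + ... + n_r ≥ 1, let σ_2, ..., σ_r be positive real numbers, and define v(x) = x^{n_1} · ∏_{i=2}^{r} (x + σ_i)^{n_i}. Let κ_1 > 0 and define, for s > 0, α(s) = (2n_1 + 2) · e^{κ_1 s} · v(s)^{-1} · ∫_0^s e^{-κ_1 x} v(x) dx. Then ∫_1^∞ α(x)^{-1/2} dx converges (is finite). -/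
/-! Since `v` is positive on `(0, ∞)`, the primitive `∫₀ˢ e^{-κ₁x} v` is bounded below by its
value at `s = 1`, while `v(s) ≤ C sᴺ` for `s ≥ 1`. Hence `α(s) ≥ c e^{κ₁s} s^{-N}`, so
`α^{-1/2}` is dominated by a multiple of `s^{N/2} e^{-κ₁s/2}`, which is integrable on `(1, ∞)`. -/

open MeasureTheory Set Real

noncomputable section

/-- The metric coefficient `α` of the steady soliton ansatz, with normalising factor `a`. -/
def steadyCoeff (a κ : ℝ) (v : ℝ → ℝ) (s : ℝ) : ℝ :=
  a * exp (κ * s) * (v s)⁻¹ * ∫ x in (0 : ℝ)..s, exp (-κ * x) * v x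

lemma prod_add_pow_le {ι : Type*} (s : Finset ι) (σ : ι → ℝ) (hσ : ∀ i ∈ s, 0 ≤ σ i)
    (n : ι → ℕ) {x : ℝ} (hx : 1 ≤ x) :
    ∏ i ∈ s, (x + σ i) ^ n i ≤ (∏ i ∈ s, (1 + σ i) ^ n i) * x ^ ∑ i ∈ s, n i := by
  calc ∏ i ∈ s, (x + σ i) ^ n i
      ≤ ∏ i ∈ s, ((1 + σ i) * x) ^ n i := by
        refine Finset.prod_le_prod (fun i hi => by have := hσ i hi; positivity) fun i hi => ?_
        have := hσ i hi
        gcongr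
        nlinarith
    _ = (∏ i ∈ s, (1 + σ i) ^ n i) * x ^ ∑ i ∈ s, n i := by
        simp_rw [mul_pow, Finset.prod_mul_distrib, Finset.prod_pow_eq_pow_sum]

section steadyCoeff

variable {v : ℝ → ℝ} (hv : Continuous v) (κ : ℝ)
include hv

lemma continuous_exp_neg_mul_mul : Continuous fun x => exp (-κ * x) * v x := by
  fun_prop

lemma measurable_steadyCoeff (a : ℝ) : Measurable (steadyCoeff a κ v) := by
  have hprim := intervalIntegral.continuous_primitive
    (fun a b => (continuous_exp_neg_mul_mul hv κ).intervalIntegrable (μ := volume) a b) 0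
  unfold steadyCoeff
  fun_prop

lemma exists_exp_le_pow_mul_steadyCoeff (hvpos : ∀ x, 0 < x → 0 < v x)
    {a C : ℝ} {N : ℕ} (ha : 0 < a) (hC : 0 < C) (hvC : ∀ x, 1 ≤ x → v x ≤ C * x ^ N) :
    ∃ c > 0, ∀ x, 1 < x → c * exp (κ * x) ≤ x ^ N * steadyCoeff a κ v x := by
  set I := ∫ t in (0 : ℝ)..1, exp (-κ * t) * v t
  have hint := continuous_exp_neg_mul_mul hv κ
  have hI : 0 < I :=
    intervalIntegral.intervalIntegral_pos_of_pos_on (hint.intervalIntegrable 0 1)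
      (fun t ht => mul_pos (exp_pos _) (hvpos t ht.1)) one_pos
  refine ⟨a * I / C, by positivity, fun x hx => ?_⟩
  have hvx : 0 < v x := hvpos x (by linarith)
  have hIx : I ≤ ∫ t in (0 : ℝ)..x, exp (-κ * t) * v t := by
    refine intervalIntegral.integral_mono_interval le_rfl zero_le_one hx.le ?_
      (hint.intervalIntegrable 0 x)
    filter_upwards [ae_restrict_mem measurableSet_Ioc] with t ht
    exact (mul_pos (exp_pos _) (hvpos t ht.1)).le
  calc a * I / C * exp (κ * x)
      = x ^ N * (a * exp (κ * x) * (C * x ^ N)⁻¹ * I) := by field_simp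
    _ ≤ x ^ N * steadyCoeff a κ v x := by
        unfold steadyCoeff
        gcongr
        exact hvC x hx.le

end steadyCoeff

lemma integrableOn_one_div_sqrt_of_exp_le {f : ℝ → ℝ} (hf : Measurable f) {c κ : ℝ} {N : ℕ}
    (hc : 0 < c) (hκ : 0 < κ) (hfc : ∀ x, 1 < x → c * exp (κ * x) ≤ x ^ N * f x) :
    IntegrableOn (fun x => 1 / √(f x)) (Ioi 1) := by
  set g : ℝ → ℝ := fun x => x ^ ((N : ℝ) / 2) * exp (-(κ / 2 * x))
  have hg : IntegrableOn g (Ioi 1) := by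
    have := integrableOn_rpow_mul_exp_neg_mul_rpow (s := (N : ℝ) / 2) (p := 1) (b := κ / 2)
      (by linarith [show (0 : ℝ) ≤ N / 2 by positivity]) one_pos (by positivity)
    simpa [g] using this.mono_set (Ioi_subset_Ioi zero_le_one)
  refine Integrable.mono' (hg.div_const √c) (measurable_const.div hf.sqrt).aestronglyMeasurable ?_
  filter_upwards [ae_restrict_mem measurableSet_Ioi] with x hx
  have hx0 : 0 < x := zero_lt_one.trans hx
  have hfx : 0 < f x :=
    pos_of_mul_pos_right ((by positivity : 0 < c * exp (κ * x)).trans_le (hfc x hx)) (by positivity)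
  have hgx : 0 ≤ g x := by dsimp only [g]; positivity
  have hg_sq : g x ^ 2 = x ^ N * exp (-κ * x) := by
    have hN : (N : ℝ) / 2 * (2 : ℕ) = N := by push_cast; ring
    dsimp only [g]
    rw [mul_pow, ← exp_nat_mul, ← rpow_mul_natCast hx0.le, hN, rpow_natCast]
    ring_nf
  have hc_le : c ≤ g x ^ 2 * f x := by
    calc c = exp (-κ * x) * (c * exp (κ * x)) := by
          rw [mul_left_comm, ← exp_add, neg_mul, neg_add_cancel, exp_zero, mul_one]
      _ ≤ exp (-κ * x) * (x ^ N * f x) := mul_le_mul_of_nonneg_left (hfc x hx) (exp_pos _).le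
      _ = g x ^ 2 * f x := by rw [hg_sq]; ring
  rw [Real.norm_of_nonneg (by positivity), div_le_div_iff₀ (by positivity) (by positivity)]
  calc 1 * √c ≤ √(g x ^ 2 * f x) := by rw [one_mul]; exact sqrt_le_sqrt hc_le
    _ = g x * √(f x) := by rw [sqrt_mul (sq_nonneg _), sqrt_sq hgx]

theorem stmt_18_general (r : ℕ) (n : ℕ → ℕ)
    (σ : ℕ → ℝ) (hσ : ∀ i ∈ Finset.Icc 2 r, 0 < σ i)
    (v : ℝ → ℝ) (hv : ∀ x, v x = x ^ n 1 * ∏ i ∈ Finset.Icc 2 r, (x + σ i) ^ n i)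
    (κ1 : ℝ) (hκ1 : 0 < κ1)
    (α : ℝ → ℝ)
    (hα : ∀ s, α s = (2 * (n 1 : ℝ) + 2) * Real.exp (κ1 * s) * (v s)⁻¹ *
      ∫ x in (0:ℝ)..s, Real.exp (-κ1 * x) * v x) :
    MeasureTheory.IntegrableOn (fun x => 1 / Real.sqrt (α x)) (Set.Ioi (1:ℝ)) := by
  obtain rfl : α = steadyCoeff (2 * n 1 + 2) κ1 v := funext hα
  have hcont : Continuous v := by
    rw [show v = _ from funext hv]
    fun_prop
  have hvpos (x : ℝ) (hx : 0 < x) : 0 < v x :=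
    hv x ▸ mul_pos (pow_pos hx _) (Finset.prod_pos fun i hi => by have := hσ i hi; positivity)
  have hvC (x : ℝ) (hx : 1 ≤ x) : v x ≤ (∏ i ∈ Finset.Icc 2 r, (1 + σ i) ^ n i) *
      x ^ (n 1 + ∑ i ∈ Finset.Icc 2 r, n i) := by
    calc v x = x ^ n 1 * ∏ i ∈ Finset.Icc 2 r, (x + σ i) ^ n i := hv x
      _ ≤ x ^ n 1 * ((∏ i ∈ Finset.Icc 2 r, (1 + σ i) ^ n i) *
          x ^ ∑ i ∈ Finset.Icc 2 r, n i) := by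
          gcongr
          exact prod_add_pow_le _ σ (fun i hi => (hσ i hi).le) n hx
      _ = _ := by ring
  obtain ⟨c, hc, hgrowth⟩ := exists_exp_le_pow_mul_steadyCoeff (a := 2 * n 1 + 2) hcont κ1 hvpos
    (by positivity) (Finset.prod_pos fun i hi => by have := hσ i hi; positivity) hvC
  exact integrableOn_one_div_sqrt_of_exp_le (measurable_steadyCoeff hcont κ1 _) hc hκ1 hgrowth

/-- Incompleteness in the steady case with `κ₁ > 0`: the coefficient `α` of (3.21)
grows exponentially, so the geodesic distance `∫ α^{-1/2}` is finite, i.e.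
`x ↦ α(x)^{-1/2}` is integrable on `(1,∞)`. -/
theorem stmt_18 (r : ℕ) (hr : 1 ≤ r) (n : ℕ → ℕ)
    (hn : 1 ≤ ∑ i ∈ Finset.Icc 1 r, n i)
    (σ : ℕ → ℝ) (hσ : ∀ i ∈ Finset.Icc 2 r, 0 < σ i)
    (v : ℝ → ℝ) (hv : ∀ x, v x = x ^ n 1 * ∏ i ∈ Finset.Icc 2 r, (x + σ i) ^ n i)
    (κ1 : ℝ) (hκ1 : 0 < κ1)
    (α : ℝ → ℝ)
    (hα : ∀ s, α s = (2 * (n 1 : ℝ) + 2) * Real.exp (κ1 * s) * (v s)⁻¹ *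
      ∫ x in (0:ℝ)..s, Real.exp (-κ1 * x) * v x) :
    MeasureTheory.IntegrableOn (fun x => 1 / Real.sqrt (α x)) (Set.Ioi (1:ℝ)) :=
  stmt_18_general r n σ hσ v hv κ1 hκ1 α hα

end
end

section
/- Let r ≥ 2, let n_1, ..., n_r be natural numbers, let q_2, ..., q_r be negative reals and σ_2, ..., σ_r be positive reals, and define Ψ(x) = (2n_1 + 2 - x) · x^{n_1} · ∏_{i=2}^{r} ((-q_i)(x + σ_i))^{n_i} and v(x) = x^{n_1} · ∏_{i=2}^{r} ((-q_i)(x + σ_i))^{n_i}. Suppose κ_1 > 0 satisfies ∫_0^∞ e^{-κ_1 x} Ψ(x) dx = 0, and define, for s > 0, α(s) = e^{κ_1 s} · v(s)^{-1} · ∫_0^s e^{-κ_1 x} Ψ(x) dx. Then α(s) > 0 for every s > 0, and α(s)/s tends to 1/κ_1 as s → +∞. -/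
/-!
With `M = 2n₁ + 2`, `Ψ` and `v` are the polynomials `Q = (M - X) V` and `V`. The polynomial
`R = expPrimitive κ Q = ∑ₖ κ^{-(k+1)} Q⁽ᵏ⁾` solves `κ R - R' = Q`, so `-e^{-κx} R(x)` is a
primitive of `e^{-κx} Q(x)`. The vanishing Laplace transform says `R(0) = 0`, whence `α = -R / V`.
By `κ R - R' = Q`, `R` has the degree of `Q` and leading coefficient `lc Q / κ = -lc V / κ`, so
`α(s) / s → 1 / κ`. Positivity: `s ↦ ∫₀ˢ e^{-κx} Ψ` vanishes at `0` and at `∞`, increases on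
`(0, M)` and decreases on `(M, ∞)`.
-/

open MeasureTheory Set Filter Polynomial

namespace Polynomial

section Field

variable {K : Type*} [Field K]

noncomputable def expPrimitive (κ : K) (Q : K[X]) : K[X] :=
  ∑ k ∈ Finset.range (Q.natDegree + 1), C (κ⁻¹ ^ (k + 1)) * derivative^[k] Q

theorem derivative_expPrimitive {κ : K} (hκ : κ ≠ 0) (Q : K[X]) :
    derivative (expPrimitive κ Q) = C κ * expPrimitive κ Q - Q := by
  have htop : derivative^[Q.natDegree + 1] Q = 0 := iterate_derivative_eq_zero (Nat.lt_succ_self _)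
  have hscale : ∀ k : ℕ, κ * κ⁻¹ ^ (k + 1) = κ⁻¹ ^ k := fun k => by
    rw [pow_succ', ← mul_assoc, mul_inv_cancel₀ hκ, one_mul]
  simp only [expPrimitive, derivative_sum, derivative_C_mul, Finset.mul_sum, ← mul_assoc, ← C_mul,
    hscale]
  rw [Finset.sum_range_succ, Finset.sum_range_succ' (fun k => C (κ⁻¹ ^ k) * derivative^[k] Q)]
  simp only [← Function.iterate_succ_apply' derivative, htop, mul_zero, add_zero, pow_zero, C_1,
    one_mul, Function.iterate_zero_apply, add_sub_cancel_right]

theorem degree_derivative_expPrimitive_lt {κ : K} (hκ : κ ≠ 0) {Q : K[X]} (hQ : Q ≠ 0) :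
    (derivative (expPrimitive κ Q)).degree < (C κ * expPrimitive κ Q).degree := by
  have hR : expPrimitive κ Q ≠ 0 := fun hR => hQ (by simpa [hR] using derivative_expPrimitive hκ Q)
  rw [degree_C_mul hκ]
  exact degree_derivative_lt hR

theorem degree_expPrimitive {κ : K} (hκ : κ ≠ 0) (Q : K[X]) :
    (expPrimitive κ Q).degree = Q.degree := by
  rcases eq_or_ne Q 0 with rfl | hQ
  · simp [expPrimitive]
  conv_rhs => rw [← sub_sub_cancel (C κ * expPrimitive κ Q) Q, ← derivative_expPrimitive hκ]
  rw [degree_sub_eq_left_of_degree_lt (degree_derivative_expPrimitive_lt hκ hQ), degree_C_mul hκ]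

theorem leadingCoeff_expPrimitive {κ : K} (hκ : κ ≠ 0) (Q : K[X]) :
    (expPrimitive κ Q).leadingCoeff = κ⁻¹ * Q.leadingCoeff := by
  rcases eq_or_ne Q 0 with rfl | hQ
  · simp [expPrimitive]
  conv_rhs => rw [← sub_sub_cancel (C κ * expPrimitive κ Q) Q, ← derivative_expPrimitive hκ]
  rw [leadingCoeff_sub_of_degree_lt (degree_derivative_expPrimitive_lt hκ hQ), leadingCoeff_mul,
    leadingCoeff_C, inv_mul_cancel_left₀ hκ]

end Field

theorem tendsto_exp_neg_mul_mul_eval {κ : ℝ} (hκ : 0 < κ) (P : ℝ[X]) :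
    Tendsto (fun x => Real.exp (-κ * x) * P.eval x) atTop (nhds 0) := by
  have h := (P.comp (C κ⁻¹ * X)).tendsto_div_exp_atTop.comp (tendsto_id.const_mul_atTop hκ)
  refine h.congr fun x => ?_
  simp [Function.comp, eval_comp, inv_mul_cancel_left₀ hκ.ne', div_eq_inv_mul, ← Real.exp_neg]

theorem integrableOn_exp_neg_mul_mul_eval {κ : ℝ} (hκ : 0 < κ) (P : ℝ[X]) (a : ℝ) :
    IntegrableOn (fun x => Real.exp (-κ * x) * P.eval x) (Ioi a) := by
  refine integrable_of_isBigO_exp_neg (half_pos hκ) (by fun_prop) ?_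
  have hsplit : (fun x => Real.exp (-κ * x) * P.eval x) =
      fun x => Real.exp (-(κ / 2) * x) * (Real.exp (-(κ / 2) * x) * P.eval x) := by
    ext x; rw [← mul_assoc, ← Real.exp_add]; ring_nf
  have hbdd := (tendsto_exp_neg_mul_mul_eval (half_pos hκ) P).isBigO_one ℝ
  rw [hsplit]
  simpa using (Asymptotics.isBigO_refl (fun x => Real.exp (-(κ / 2) * x)) atTop).mul hbdd

theorem hasDerivAt_exp_neg_mul_mul_eval_expPrimitive {κ : ℝ} (hκ : κ ≠ 0) (Q : ℝ[X]) (x : ℝ) :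
    HasDerivAt (fun x => -(Real.exp (-κ * x) * (expPrimitive κ Q).eval x))
      (Real.exp (-κ * x) * Q.eval x) x := by
  have h := (((hasDerivAt_id x).const_mul (-κ)).exp.mul ((expPrimitive κ Q).hasDerivAt x)).neg
  refine h.congr_deriv ?_
  rw [derivative_expPrimitive hκ]
  simp only [id, eval_sub, eval_mul, eval_C]
  ring

theorem integral_Ioi_exp_neg_mul_mul_eval {κ : ℝ} (hκ : 0 < κ) (Q : ℝ[X]) (a : ℝ) :
    ∫ x in Ioi a, Real.exp (-κ * x) * Q.eval x = Real.exp (-κ * a) * (expPrimitive κ Q).eval a := by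
  rw [integral_Ioi_of_hasDerivAt_of_tendsto'
    (fun x _ => hasDerivAt_exp_neg_mul_mul_eval_expPrimitive hκ.ne' Q x)
    (integrableOn_exp_neg_mul_mul_eval hκ Q a) (tendsto_exp_neg_mul_mul_eval hκ _).neg]
  ring

theorem intervalIntegral_exp_neg_mul_mul_eval {κ : ℝ} (hκ : κ ≠ 0) (Q : ℝ[X]) (a b : ℝ) :
    ∫ x in a..b, Real.exp (-κ * x) * Q.eval x =
      Real.exp (-κ * a) * (expPrimitive κ Q).eval a -
        Real.exp (-κ * b) * (expPrimitive κ Q).eval b := by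
  rw [intervalIntegral.integral_eq_sub_of_hasDerivAt
    (fun x _ => hasDerivAt_exp_neg_mul_mul_eval_expPrimitive hκ Q x)
    (Continuous.intervalIntegrable (by fun_prop) _ _)]
  ring

theorem exp_mul_intervalIntegral_exp_neg_mul_mul_eval {κ : ℝ} (hκ : 0 < κ) {Q : ℝ[X]}
    (hzero : ∫ x in Ioi 0, Real.exp (-κ * x) * Q.eval x = 0) (s : ℝ) :
    Real.exp (κ * s) * ∫ x in (0 : ℝ)..s, Real.exp (-κ * x) * Q.eval x =
      -(expPrimitive κ Q).eval s := by
  rw [integral_Ioi_exp_neg_mul_mul_eval hκ, mul_zero, Real.exp_zero, one_mul] at hzero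
  rw [intervalIntegral_exp_neg_mul_mul_eval hκ.ne', hzero, mul_zero, zero_sub, mul_neg,
    ← mul_assoc, ← Real.exp_add, neg_mul, add_neg_cancel, Real.exp_zero, one_mul]

theorem tendsto_eval_expPrimitive_div_eval {κ : ℝ} (hκ : κ ≠ 0) {Q P : ℝ[X]}
    (hdeg : Q.degree = P.degree) :
    Tendsto (fun x => (expPrimitive κ Q).eval x / P.eval x) atTop
      (nhds (κ⁻¹ * Q.leadingCoeff / P.leadingCoeff)) := by
  rw [← leadingCoeff_expPrimitive hκ]
  exact div_tendsto_atTop_leadingCoeff_div_of_degree_eq _ _ ((degree_expPrimitive hκ Q).trans hdeg)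

theorem tendsto_neg_eval_expPrimitive_C_sub_X_mul_div {κ : ℝ} (hκ : κ ≠ 0) (M : ℝ) {V : ℝ[X]}
    (hV : V ≠ 0) :
    Tendsto (fun s => -(expPrimitive κ ((C M - X) * V)).eval s / (s * V.eval s)) atTop
      (nhds κ⁻¹) := by
  have hsub : C M - X = -(X - C M) := by ring
  have hdeg : ((C M - X) * V).degree = (-(X * V)).degree := by
    rw [hsub, degree_neg, degree_mul, degree_mul, degree_neg, degree_X, degree_X_sub_C]
  have hlc : ((C M - X) * V).leadingCoeff = (-(X * V)).leadingCoeff := by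
    rw [hsub, leadingCoeff_neg, leadingCoeff_mul, leadingCoeff_mul, leadingCoeff_neg,
      leadingCoeff_X, leadingCoeff_X_sub_C, neg_one_mul, one_mul]
  have hlcV : (-(X * V)).leadingCoeff ≠ 0 := by simpa using hV
  have hlim := tendsto_eval_expPrimitive_div_eval hκ hdeg
  rw [hlc, mul_div_assoc, div_self hlcV, mul_one] at hlim
  refine hlim.congr fun s => ?_
  simp only [eval_neg, eval_mul, eval_X]
  ring

end Polynomial

theorem setIntegral_Ioi_pos {f : ℝ → ℝ} {a : ℝ} (hf : IntegrableOn f (Ioi a))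
    (hpos : ∀ x ∈ Ioi a, 0 < f x) : 0 < ∫ x in Ioi a, f x := by
  rw [setIntegral_pos_iff_support_of_nonneg_ae
    ((ae_restrict_iff' measurableSet_Ioi).2 (.of_forall fun x hx => (hpos x hx).le)) hf,
    inter_eq_self_of_subset_right fun x hx => Function.mem_support.2 (hpos x hx).ne',
    Real.volume_Ioi]
  exact ENNReal.zero_lt_top

theorem intervalIntegral_pos_of_integral_Ioi_eq_zero {f : ℝ → ℝ} {a m s : ℝ}
    (hf : IntegrableOn f (Ioi a)) (hzero : ∫ x in Ioi a, f x = 0)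
    (hpos : ∀ x ∈ Ioo a m, 0 < f x) (hneg : ∀ x ∈ Ioi m, f x < 0) (hs : a < s) :
    0 < ∫ x in a..s, f x := by
  rcases le_or_gt s m with hsm | hms
  · refine intervalIntegral.intervalIntegral_pos_of_pos_on ?_
      (fun x hx => hpos x ⟨hx.1, hx.2.trans_le hsm⟩) hs
    exact (intervalIntegrable_iff_integrableOn_Ioc_of_le hs.le).2 (hf.mono_set Ioc_subset_Ioi_self)
  · rw [← intervalIntegral.integral_Ioi_sub_Ioi hf hs.le, hzero, zero_sub, ← integral_neg]
    exact setIntegral_Ioi_pos (hf.mono_set (Ioi_subset_Ioi hs.le)).neg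
      fun x hx => neg_pos.2 (hneg x (hms.trans hx))

theorem intervalIntegral_exp_neg_mul_mul_eval_C_sub_X_mul_pos {κ M s : ℝ} {V : ℝ[X]}
    (hκ : 0 < κ) (hM : 0 < M) (hV : ∀ x, 0 < x → 0 < V.eval x)
    (hzero : ∫ x in Ioi 0, Real.exp (-κ * x) * ((C M - X) * V).eval x = 0) (hs : 0 < s) :
    0 < ∫ x in (0 : ℝ)..s, Real.exp (-κ * x) * ((C M - X) * V).eval x := by
  refine intervalIntegral_pos_of_integral_Ioi_eq_zero (m := M)
    (integrableOn_exp_neg_mul_mul_eval hκ _ 0) hzero (fun x hx => ?_) (fun x hx => ?_) hs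
  · rw [eval_mul, eval_sub, eval_C, eval_X]
    exact mul_pos (Real.exp_pos _) (mul_pos (sub_pos.2 hx.2) (hV x hx.1))
  · rw [eval_mul, eval_sub, eval_C, eval_X]
    exact mul_neg_of_pos_of_neg (Real.exp_pos _)
      (mul_neg_of_neg_of_pos (sub_neg.2 hx) (hV x (hM.trans hx)))

theorem stmt_19_general (r : ℕ) (n : ℕ → ℕ) (q σ : ℕ → ℝ)
    (hq : ∀ i ∈ Finset.Icc 2 r, q i < 0)
    (hσ : ∀ i ∈ Finset.Icc 2 r, 0 < σ i)
    (Ψ v : ℝ → ℝ)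
    (hΨ : ∀ x, Ψ x = (2 * (n 1 : ℝ) + 2 - x) * x ^ n 1 *
      ∏ i ∈ Finset.Icc 2 r, ((-q i) * (x + σ i)) ^ n i)
    (hv : ∀ x, v x = x ^ n 1 * ∏ i ∈ Finset.Icc 2 r, ((-q i) * (x + σ i)) ^ n i)
    (κ1 : ℝ) (hκ1 : 0 < κ1)
    (hzero : (∫ x in Set.Ioi (0:ℝ), Real.exp (-κ1 * x) * Ψ x) = 0)
    (α : ℝ → ℝ)
    (hα : ∀ s, α s = Real.exp (κ1 * s) * (v s)⁻¹ *
      ∫ x in (0:ℝ)..s, Real.exp (-κ1 * x) * Ψ x) :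
    (∀ s : ℝ, 0 < s → 0 < α s) ∧
      Filter.Tendsto (fun s => α s / s) Filter.atTop (nhds (1 / κ1)) := by
  obtain ⟨V, hvV⟩ : ∃ V : ℝ[X], ∀ x, v x = V.eval x :=
    ⟨X ^ n 1 * ∏ i ∈ Finset.Icc 2 r, (C (-q i) * (X + C (σ i))) ^ n i,
      fun x => by simp [hv, eval_prod]⟩
  have hVpos : ∀ x, 0 < x → 0 < V.eval x := fun x hx => by
    rw [← hvV, hv]
    exact mul_pos (pow_pos hx _) (Finset.prod_pos fun i hi =>
      pow_pos (mul_pos (neg_pos.2 (hq i hi)) (add_pos hx (hσ i hi))) _)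
  have hV : V ≠ 0 := fun h => by simpa [h] using hVpos 1 one_pos
  set M : ℝ := 2 * (n 1 : ℝ) + 2
  have hΨQ : ∀ x, Ψ x = ((C M - X) * V).eval x := fun x => by
    rw [hΨ, mul_assoc, ← hv, hvV, eval_mul, eval_sub, eval_C, eval_X]
  simp only [hΨQ, hvV] at hzero hα
  refine ⟨fun s hs => ?_, ?_⟩
  · have hint := intervalIntegral_exp_neg_mul_mul_eval_C_sub_X_mul_pos hκ1 (by positivity) hVpos
      hzero hs
    have := hVpos s hs
    rw [hα]
    positivity
  · rw [one_div]
    refine (tendsto_neg_eval_expPrimitive_C_sub_X_mul_div hκ1.ne' M hV).congr fun s => ?_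
    rw [hα, mul_right_comm, exp_mul_intervalIntegral_exp_neg_mul_mul_eval hκ1 hzero]
    ring

/-- Noncompact shrinking solitons (Theorem 3.8, analytic core): with
`Ψ(x) = (2n₁+2-x) v(x)`, `v(x) = x^{n₁} ∏ (-qᵢ(x+σᵢ))^{nᵢ}`, `κ₁ > 0` chosen so that
`∫_0^∞ e^{-κ₁x} Ψ(x) dx = 0`, the coefficient
`α(s) = e^{κ₁ s} v(s)⁻¹ ∫_0^s e^{-κ₁x} Ψ(x) dx` is positive on `(0,∞)` and satisfies
`α(s)/s → 1/κ₁` as `s → +∞`. -/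
theorem stmt_19 (r : ℕ) (hr : 2 ≤ r) (n : ℕ → ℕ) (q σ : ℕ → ℝ)
    (hq : ∀ i ∈ Finset.Icc 2 r, q i < 0)
    (hσ : ∀ i ∈ Finset.Icc 2 r, 0 < σ i)
    (Ψ v : ℝ → ℝ)
    (hΨ : ∀ x, Ψ x = (2 * (n 1 : ℝ) + 2 - x) * x ^ n 1 *
      ∏ i ∈ Finset.Icc 2 r, ((-q i) * (x + σ i)) ^ n i)
    (hv : ∀ x, v x = x ^ n 1 * ∏ i ∈ Finset.Icc 2 r, ((-q i) * (x + σ i)) ^ n i)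
    (κ1 : ℝ) (hκ1 : 0 < κ1)
    (hzero : (∫ x in Set.Ioi (0:ℝ), Real.exp (-κ1 * x) * Ψ x) = 0)
    (α : ℝ → ℝ)
    (hα : ∀ s, α s = Real.exp (κ1 * s) * (v s)⁻¹ *
      ∫ x in (0:ℝ)..s, Real.exp (-κ1 * x) * Ψ x) :
    (∀ s : ℝ, 0 < s → 0 < α s) ∧
      Filter.Tendsto (fun s => α s / s) Filter.atTop (nhds (1 / κ1)) :=
  stmt_19_general r n q σ hq hσ Ψ v hΨ hv κ1 hκ1 hzero α hα
end
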